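/- arXiv:1503.04679 — 4 statements merged into one kernel-verified Lean document; each statement's English description precedes it below -/
import Mathlib

section
/- Let G be a cyclic group of order n ≥ 4 and let d ∈ [3, n−1]. Then for each k ∈ ℕ₀, the set (2k+2) + {0, d−2} + {ν(n−2) : ν ∈ [0, k]} belongs to 𝓛(G). -/
/-- A minimal zero-sum sequence over `G`: a nonempty zero-sum sequence that is not the
union of two nonempty zero-sum sequences (i.e. an atom of the monoid `ℬ(G)` of zero-sum
sequences over `G`). -/
def IsMinZeroSum {G : Type*} [AddCommGroup G] (A : Multiset G) : Prop :=
  A ≠ 0 ∧ A.sum = 0 ∧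
    ¬∃ B C : Multiset G, B ≠ 0 ∧ C ≠ 0 ∧ B.sum = 0 ∧ C.sum = 0 ∧ A = B + C

/-- `lengthSet A` is the set of lengths `𝖫(A)`: the set of all `k` such that `A` is a
union of `k` atoms. -/
def lengthSet {G : Type*} [AddCommGroup G] (A : Multiset G) : Set ℕ :=
  {k | ∃ f : Multiset (Multiset G),
    Multiset.card f = k ∧ (∀ B ∈ f, IsMinZeroSum B) ∧ f.sum = A}

/-- `lengthSystem G` is the system of sets of lengths `𝓛(G) = {𝖫(A) : A ∈ ℬ(G)}`. -/
def lengthSystem (G : Type*) [AddCommGroup G] : Set (Set ℕ) :=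
  {L | ∃ A : Multiset G, A.sum = 0 ∧ lengthSet A = L}

/-- Sets of lengths of a sequence supported in `G₀ ⊆ G`, with respect to factorizations
into atoms supported in `G₀`. -/
def lengthSet₀ {G : Type*} [AddCommGroup G] (G₀ : Set G) (A : Multiset G) : Set ℕ :=
  {k | ∃ f : Multiset (Multiset G),
    Multiset.card f = k ∧ (∀ B ∈ f, IsMinZeroSum B ∧ ∀ g ∈ B, g ∈ G₀) ∧ f.sum = A}

/-- The system of sets of lengths `𝓛(G₀)` of a subset `G₀ ⊆ G`. -/
def lengthSystem₀ {G : Type*} [AddCommGroup G] (G₀ : Set G) : Set (Set ℕ) :=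
  {L | ∃ A : Multiset G, A.sum = 0 ∧ (∀ g ∈ A, g ∈ G₀) ∧ lengthSet₀ G₀ A = L}

/-- The set of successive distances `Δ(L)` of a set `L ⊆ ℕ`. -/
def deltaOfSet (L : Set ℕ) : Set ℕ :=
  {d | ∃ a ∈ L, ∃ b ∈ L, a < b ∧ d = b - a ∧ ∀ c ∈ L, c ≤ a ∨ b ≤ c}

/-- `Δ(G₀)`: the union of the sets `Δ(L)` over all `L ∈ 𝓛(G₀)`. -/
def deltaOfSubset {G : Type*} [AddCommGroup G] (G₀ : Set G) : Set ℕ :=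
  ⋃ L ∈ lengthSystem₀ G₀, deltaOfSet L

/-- `Δ*(G) = {min Δ(G₀) : G₀ ⊆ G with Δ(G₀) ≠ ∅}`. -/
def deltaStar (G : Type*) [AddCommGroup G] : Set ℕ :=
  {d | ∃ G₀ : Set G, (deltaOfSubset G₀).Nonempty ∧ sInf (deltaOfSubset G₀) = d}

/-- The Davenport constant of `G`: the maximal length of a minimal zero-sum sequence. -/
noncomputable def davenport (G : Type*) [AddCommGroup G] : ℕ :=
  sSup {n | ∃ A : Multiset G, IsMinZeroSum A ∧ Multiset.card A = n}

/-- View a set of natural numbers as a set of integers. -/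
def natSetToInt (L : Set ℕ) : Set ℤ :=
  (fun n : ℕ => (n : ℤ)) '' L

/-- `L` is an arithmetical progression with difference `d > 0`. -/
def IsAP (d : ℕ) (L : Set ℤ) : Prop :=
  0 < d ∧ ∃ (a : ℤ) (l : ℕ), L = {x : ℤ | ∃ ν : ℕ, ν ≤ l ∧ x = a + (ν : ℤ) * d}

/-- `L` is an almost arithmetical progression (AAP) with difference `d > 0` and bound `M`:
`L = y + (L' ∪ L* ∪ L'') ⊆ y + dℤ` with `L* = {0, d, …, ld}`, `L' ⊆ [-M, -1]`,
`L'' ⊆ ld + [1, M]`. -/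
def IsAAP (d M : ℕ) (L : Set ℤ) : Prop :=
  0 < d ∧ ∃ (y : ℤ) (l : ℕ) (L' L'' : Set ℤ),
    L' ⊆ Set.Icc (-(M : ℤ)) (-1) ∧
    L'' ⊆ Set.Icc ((l : ℤ) * d + 1) ((l : ℤ) * d + M) ∧
    (∀ x ∈ L', (d : ℤ) ∣ x) ∧ (∀ x ∈ L'', (d : ℤ) ∣ x) ∧
    L = (fun x => y + x) '' (L' ∪ {x : ℤ | ∃ ν : ℕ, ν ≤ l ∧ x = (ν : ℤ) * d} ∪ L'')

/-- `L` is an arithmetical multiprogression (AMP) with difference `d > 0` and period `D`,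
where `{0, d} ⊆ D ⊆ [0, d]`: `L` is finite nonempty and
`L = (min L + D + dℤ) ∩ [min L, max L]`. -/
def IsAMP (d : ℕ) (D : Set ℕ) (L : Set ℤ) : Prop :=
  0 < d ∧ 0 ∈ D ∧ d ∈ D ∧ D ⊆ Set.Icc 0 d ∧ L.Finite ∧ L.Nonempty ∧
    ∃ a b : ℤ, IsLeast L a ∧ IsGreatest L b ∧
      L = {x : ℤ | ∃ e ∈ D, ∃ m : ℤ, x = a + (e : ℤ) + m * d} ∩ Set.Icc a b

/-- `L` is an almost arithmetical multiprogression (AAMP) with difference `d > 0`,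
period `D` (with `{0, d} ⊆ D ⊆ [0, d]`) and bound `M`:
`L = y + (L' ∪ L* ∪ L'') ⊆ y + D + dℤ` where `L*` is an AMP with difference `d`,
period `D` and `min L* = 0`, `L' ⊆ [-M, -1]` and `L'' ⊆ max L* + [1, M]`. -/
def IsAAMP (d : ℕ) (D : Set ℕ) (M : ℕ) (L : Set ℤ) : Prop :=
  0 < d ∧ 0 ∈ D ∧ d ∈ D ∧ D ⊆ Set.Icc 0 d ∧
    ∃ (y : ℤ) (L' Lstar L'' : Set ℤ) (b : ℤ),
      IsLeast Lstar 0 ∧ IsGreatest Lstar b ∧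
      Lstar = {x : ℤ | ∃ e ∈ D, ∃ m : ℤ, x = (e : ℤ) + m * d} ∩ Set.Icc 0 b ∧
      L' ⊆ Set.Icc (-(M : ℤ)) (-1) ∧
      L'' ⊆ Set.Icc (b + 1) (b + (M : ℤ)) ∧
      (∀ x ∈ L' ∪ L'', ∃ e ∈ D, ∃ m : ℤ, x = (e : ℤ) + m * d) ∧
      L = (fun x => y + x) '' (L' ∪ Lstar ∪ L'')

/-- An atom of the relative block monoid `ℬ_K(G)`: a nonempty sequence `S` with
`σ(S) ∈ K` such that no proper nonempty subsequence has sum in `K`. -/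
def IsAtomRel {G : Type*} [AddCommGroup G] (K : AddSubgroup G) (S : Multiset G) : Prop :=
  S ≠ 0 ∧ S.sum ∈ K ∧ ∀ T : Multiset G, T ≤ S → T ≠ 0 → T ≠ S → T.sum ∉ K

/-- The relative Davenport constant `D_K(G) ∈ ℕ ∪ {∞}`: the smallest `l` such that every
sequence over `G` of length at least `l` has a nonempty subsequence with sum in `K`. -/
noncomputable def davenportRel (G : Type*) [AddCommGroup G] (K : AddSubgroup G) : ℕ∞ :=
  sInf {l : ℕ∞ | ∀ S : Multiset G, l ≤ (Multiset.card S : ℕ∞) →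
    ∃ T : Multiset G, T ≤ S ∧ T ≠ 0 ∧ T.sum ∈ K}

/-! Let `g` generate `G`, put `h = (d - 1) • g` and `A = h g^((k + 1) n) (-g)^(k n + d - 1)`.
An atom dividing `A` is `g (-g)`, `g^n`, `(-g)^n`, or the one atom containing `h`, which is
`h g^(n - d + 1)` or `h (-g)^(d - 1)`. Counting the copies of `g` and `-g` leaves exactly the
factorizations `h (-g)^(d - 1) · g^n · (g^n (-g)^n)^(k - ν) · (g (-g))^(ν n)` and
`h g^(n - d + 1) · (g^n (-g)^n)^(k - ν) · (g (-g))^(ν n + d - 1)` for `ν ∈ [0, k]`, of lengths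
`2k + 2 + ν(n - 2)` and `2k + d + ν(n - 2)`. -/

open Multiset

section Atoms

variable {G : Type*} [AddCommGroup G]

theorem isMinZeroSum_iff {A : Multiset G} :
    IsMinZeroSum A ↔ A ≠ 0 ∧ A.sum = 0 ∧ ∀ B ≤ A, B.sum = 0 → B = 0 ∨ B = A := by
  classical
  constructor
  · rintro ⟨hA0, hA, hmin⟩
    refine ⟨hA0, hA, fun B hBA hB => ?_⟩
    by_contra! hne
    have hsplit : B + (A - B) = A := add_tsub_cancel_of_le hBA
    refine hmin ⟨B, A - B, hne.1, fun h => hne.2 ?_, hB, ?_, hsplit.symm⟩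
    · rwa [h, add_zero] at hsplit
    · rw [← hsplit, sum_add, hB, zero_add] at hA
      exact hA
  · rintro ⟨hA0, hA, hmin⟩
    refine ⟨hA0, hA, ?_⟩
    rintro ⟨B, C, hB0, hC0, hB, -, rfl⟩
    rcases hmin B (le_add_right le_rfl) hB with rfl | h
    · exact hB0 rfl
    · exact hC0 (by simpa using h)

theorem IsMinZeroSum.eq_of_le {A B : Multiset G} (hA : IsMinZeroSum A) (hBA : B ≤ A)
    (hB0 : B ≠ 0) (hB : B.sum = 0) : B = A :=
  ((isMinZeroSum_iff.mp hA).2.2 B hBA hB).resolve_left hB0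

theorem isMinZeroSum_pair {g : G} (hg : g ≠ 0) : IsMinZeroSum {g, -g} := by
  refine isMinZeroSum_iff.mpr ⟨by simp, by simp, fun B hB hBs => ?_⟩
  have hcard : card B ≤ 2 := by simpa using card_le_card hB
  interval_cases h : card B
  · exact Or.inl (card_eq_zero.mp h)
  · obtain ⟨x, rfl⟩ := card_eq_one.mp h
    have hx : x = g ∨ x = -g := by simpa using mem_of_le hB (mem_singleton_self x)
    rcases hx with rfl | rfl <;> simp_all
  · exact Or.inr (eq_of_le_of_card_le hB (by simp [h]))

theorem eq_zero_of_le_replicate_of_sum_eq_zero {g : G} {m : ℕ} (hm : m < addOrderOf g)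
    {B : Multiset G} (hB : B ≤ replicate m g) (hBs : B.sum = 0) : B = 0 := by
  obtain ⟨j, hj, rfl⟩ := le_replicate_iff.mp hB
  rw [sum_replicate, ← addOrderOf_dvd_iff_nsmul_eq_zero] at hBs
  simp [Nat.eq_zero_of_dvd_of_lt hBs (by omega)]

theorem isMinZeroSum_replicate_addOrderOf {g : G} (hg : 0 < addOrderOf g) :
    IsMinZeroSum (replicate (addOrderOf g) g) := by
  refine isMinZeroSum_iff.mpr
    ⟨ne_of_apply_ne card (by simpa using hg.ne'), by simp, fun B hB hBs => ?_⟩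
  obtain ⟨j, hj, rfl⟩ := le_replicate_iff.mp hB
  rw [sum_replicate, ← addOrderOf_dvd_iff_nsmul_eq_zero] at hBs
  rcases hj.lt_or_eq with hlt | rfl
  · simp [Nat.eq_zero_of_dvd_of_lt hBs hlt]
  · exact Or.inr rfl

theorem IsMinZeroSum.eq_replicate_addOrderOf {g : G} {B : Multiset G} (hB : IsMinZeroSum B)
    (hBg : ∀ x ∈ B, x = g) : B = replicate (addOrderOf g) g := by
  have hB0 : B ≠ 0 := hB.1
  have hdvd : addOrderOf g ∣ card B := by
    rw [addOrderOf_dvd_iff_nsmul_eq_zero, ← sum_replicate, ← eq_replicate_card.mpr hBg]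
    exact hB.2.1
  have hg : 0 < addOrderOf g := Nat.pos_of_ne_zero fun h => by simp_all
  refine (hB.eq_of_le ?_ (ne_of_apply_ne card (by simpa using hg.ne')) (by simp)).symm
  rw [eq_replicate_card.mpr hBg]
  exact replicate_le_replicate _ |>.mpr (Nat.le_of_dvd (card_pos.mpr hB0) hdvd)

theorem isMinZeroSum_cons_replicate_iff {g h : G} {m : ℕ} (hg : 0 < addOrderOf g)
    (hhg : h ≠ g) : IsMinZeroSum (h ::ₘ replicate m g) ↔ m < addOrderOf g ∧ m • g + h = 0 := by
  constructor
  · intro hA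
    have hsum : m • g + h = 0 := by simpa [add_comm] using hA.2.1
    refine ⟨lt_of_not_ge fun hle => hhg ?_, hsum⟩
    have hU : replicate (addOrderOf g) g = h ::ₘ replicate m g :=
      hA.eq_of_le (((replicate_le_replicate _).mpr hle).trans (le_cons_self _ _))
        (ne_of_apply_ne card (by simpa using hg.ne')) (by simp)
    exact eq_of_mem_replicate (hU ▸ mem_cons_self h _)
  · rintro ⟨hm, hsum⟩
    refine isMinZeroSum_iff.mpr ⟨cons_ne_zero, by simpa [add_comm] using hsum, fun B hB hBs => ?_⟩
    by_cases hhB : h ∈ B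
    · obtain ⟨C, rfl⟩ := exists_cons_of_mem hhB
      obtain ⟨j, hj, rfl⟩ := le_replicate_iff.mp ((cons_le_cons_iff h).mp hB)
      rw [sum_cons, sum_replicate, ← hsum, add_comm h] at hBs
      rw [nsmul_injOn_Iio_addOrderOf (hj.trans_lt hm) hm (add_right_cancel hBs)]
      exact Or.inr rfl
    · exact Or.inl (eq_zero_of_le_replicate_of_sum_eq_zero hm ((le_cons_of_notMem hhB).mp hB) hBs)

theorem isMinZeroSum_cons_replicate_iff_eq {g h : G} {m m₀ : ℕ}
    (hhg : h ≠ g) (hm₀ : m₀ < addOrderOf g) (hsum₀ : m₀ • g + h = 0) :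
    IsMinZeroSum (h ::ₘ replicate m g) ↔ m = m₀ := by
  rw [isMinZeroSum_cons_replicate_iff (by omega) hhg]
  refine ⟨fun ⟨hm, hsum⟩ => ?_, by rintro rfl; exact ⟨hm₀, hsum₀⟩⟩
  exact nsmul_injOn_Iio_addOrderOf hm hm₀ (add_right_cancel (hsum.trans hsum₀.symm))

theorem pair_le_of_mem {g : G} (hg : g ≠ -g) {B : Multiset G} (hgB : g ∈ B) (hngB : -g ∈ B) :
    {g, -g} ≤ B :=
  (le_iff_subset (by simpa using hg)).mpr (by simp [cons_subset, hgB, hngB])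

theorem IsMinZeroSum.eq_pair_or_eq_replicate {g : G} (hg : g ≠ -g) {B : Multiset G}
    (hB : IsMinZeroSum B) (hBg : ∀ x ∈ B, x = g ∨ x = -g) :
    B = {g, -g} ∨ B = replicate (addOrderOf g) g ∨ B = replicate (addOrderOf g) (-g) := by
  by_cases hgB : g ∈ B
  · by_cases hngB : -g ∈ B
    · exact Or.inl (hB.eq_of_le (pair_le_of_mem hg hgB hngB) (by simp) (by simp)).symm
    · refine Or.inr (Or.inl (hB.eq_replicate_addOrderOf fun x hx => ?_))
      exact (hBg x hx).resolve_right (by rintro rfl; exact hngB hx)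
  · refine Or.inr (Or.inr ?_)
    rw [← addOrderOf_neg]
    exact hB.eq_replicate_addOrderOf fun x hx =>
      (hBg x hx).resolve_left (by rintro rfl; exact hgB hx)

theorem IsMinZeroSum.exists_eq_replicate_of_cons {g h : G} (hg : g ≠ -g) (hhg : h ≠ g)
    (hhng : h ≠ -g) {B : Multiset G} (hB : IsMinZeroSum (h ::ₘ B))
    (hBg : ∀ x ∈ B, x = g ∨ x = -g) : ∃ m, B = replicate m g ∨ B = replicate m (-g) := by
  by_cases hgB : g ∈ B
  · by_cases hngB : -g ∈ B
    · have hpair := hB.eq_of_le ((pair_le_of_mem hg hgB hngB).trans (le_cons_self _ _))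
        (by simp) (by simp)
      have hh : h ∈ ({g, -g} : Multiset G) := hpair ▸ mem_cons_self h B
      simp [hhg, hhng] at hh
    · refine ⟨card B, Or.inl (eq_replicate_card.mpr fun x hx => ?_)⟩
      exact (hBg x hx).resolve_right (by rintro rfl; exact hngB hx)
  · refine ⟨card B, Or.inr (eq_replicate_card.mpr fun x hx => ?_)⟩
    exact (hBg x hx).resolve_left (by rintro rfl; exact hgB hx)

end Atoms

section Factorizations

variable {α : Type*}

theorem Multiset.nsmul_pair (a b : α) (u : ℕ) :
    u • ({a, b} : Multiset α) = replicate u a + replicate u b := by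
  rw [insert_eq_cons, ← singleton_add, nsmul_add, nsmul_singleton, nsmul_singleton]

theorem Multiset.exists_eq_replicate_add_replicate_add_replicate {a b c : α} {s : Multiset α}
    (hs : ∀ x ∈ s, x = a ∨ x = b ∨ x = c) :
    ∃ i j k, s = replicate i a + replicate j b + replicate k c := by
  induction s using Multiset.induction_on with
  | empty => exact ⟨0, 0, 0, by simp⟩
  | cons x t ih =>
    obtain ⟨i, j, k, rfl⟩ := ih fun y hy => hs y (mem_cons_of_mem hy)
    rcases hs x (mem_cons_self _ _) with rfl | rfl | rfl
    · exact ⟨i + 1, j, k, by simp [replicate_succ]⟩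
    · exact ⟨i, j + 1, k, by simp [replicate_succ, add_cons]⟩
    · exact ⟨i, j, k + 1, by simp [replicate_succ, add_cons]⟩

theorem Multiset.replicate_add_replicate_inj {a b : α} (hab : a ≠ b) {i j i' j' : ℕ} :
    replicate i a + replicate j b = replicate i' a + replicate j' b ↔ i = i' ∧ j = j' := by
  classical
  refine ⟨fun h => ⟨?_, ?_⟩, by rintro ⟨rfl, rfl⟩; rfl⟩
  · simpa [count_replicate, hab.symm] using congrArg (count a) h
  · simpa [count_replicate, hab] using congrArg (count b) h

variable {G : Type*} [AddCommGroup G]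

noncomputable def consPairFactorization (B : Multiset G) (g : G) (u w c : ℕ) :
    Multiset (Multiset G) :=
  B ::ₘ (replicate u {g, -g} + replicate w (replicate (addOrderOf g) g) +
    replicate c (replicate (addOrderOf g) (-g)))

theorem card_consPairFactorization (B : Multiset G) (g : G) (u w c : ℕ) :
    card (consPairFactorization B g u w c) = 1 + (u + w + c) := by
  simp only [consPairFactorization, card_cons, card_add, card_replicate]
  ring

theorem sum_consPairFactorization (B : Multiset G) (g : G) (u w c : ℕ) :
    (consPairFactorization B g u w c).sum =
      B + (replicate (u + w * addOrderOf g) g + replicate (u + c * addOrderOf g) (-g)) := by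
  simp only [consPairFactorization, sum_cons, sum_add, sum_replicate, nsmul_replicate,
    replicate_add, nsmul_pair]
  abel

theorem isMinZeroSum_of_mem_consPairFactorization {g : G} (hg : g ≠ -g)
    (hN : 0 < addOrderOf g) {B C : Multiset G} (hB : IsMinZeroSum B) {u w c : ℕ}
    (hC : C ∈ consPairFactorization B g u w c) : IsMinZeroSum C := by
  simp only [consPairFactorization, mem_cons, mem_add] at hC
  rcases hC with rfl | (hC | hC) | hC
  · exact hB
  · rw [eq_of_mem_replicate hC]
    exact isMinZeroSum_pair fun h => hg (by simp [h])
  · rw [eq_of_mem_replicate hC]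
    exact isMinZeroSum_replicate_addOrderOf hN
  · rw [eq_of_mem_replicate hC, ← addOrderOf_neg]
    exact isMinZeroSum_replicate_addOrderOf (by rwa [addOrderOf_neg])

theorem exists_eq_consPairFactorization {g h : G} (hg : g ≠ -g) (hhg : h ≠ g) (hhng : h ≠ -g)
    {f : Multiset (Multiset G)} (hf : ∀ B ∈ f, IsMinZeroSum B) {a b : ℕ}
    (hsum : f.sum = h ::ₘ (replicate a g + replicate b (-g))) :
    ∃ B u w c, (∃ m, B = replicate m g ∨ B = replicate m (-g)) ∧ IsMinZeroSum (h ::ₘ B) ∧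
      f = consPairFactorization (h ::ₘ B) g u w c := by
  obtain ⟨B₀, hB₀f, hhB₀⟩ := mem_join.mp (show h ∈ f.sum by simp [hsum])
  obtain ⟨f', rfl⟩ := exists_cons_of_mem hB₀f
  obtain ⟨B, rfl⟩ := exists_cons_of_mem hhB₀
  rw [sum_cons, cons_add, cons_inj_right] at hsum
  have hsupp : ∀ x ∈ B + f'.sum, x = g ∨ x = -g := by
    intro x hx
    rw [hsum, mem_add] at hx
    exact hx.imp eq_of_mem_replicate eq_of_mem_replicate
  have hatom := hf _ (mem_cons_self _ _)
  obtain ⟨m, hm⟩ := hatom.exists_eq_replicate_of_cons hg hhg hhng fun x hx =>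
    hsupp x (mem_add.mpr (Or.inl hx))
  obtain ⟨u, w, c, rfl⟩ := exists_eq_replicate_add_replicate_add_replicate fun C hC =>
    (hf C (mem_cons_of_mem hC)).eq_pair_or_eq_replicate hg fun x hx =>
      hsupp x (mem_add.mpr (Or.inr (mem_join.mpr ⟨C, hC, hx⟩)))
  exact ⟨B, u, w, c, ⟨m, hm⟩, hatom, rfl⟩

theorem mem_lengthSet_cons_replicate_add_replicate_iff {g h : G} (hg : g ≠ -g)
    (hN : 0 < addOrderOf g) (hhg : h ≠ g) (hhng : h ≠ -g) {a b L : ℕ} :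
    L ∈ lengthSet (h ::ₘ (replicate a g + replicate b (-g))) ↔
      (∃ m, IsMinZeroSum (h ::ₘ replicate m g) ∧ ∃ u w c,
        m + (u + w * addOrderOf g) = a ∧ u + c * addOrderOf g = b ∧ L = 1 + (u + w + c)) ∨
      (∃ m, IsMinZeroSum (h ::ₘ replicate m (-g)) ∧ ∃ u w c,
        u + w * addOrderOf g = a ∧ m + (u + c * addOrderOf g) = b ∧ L = 1 + (u + w + c)) := by
  constructor
  · rintro ⟨f, rfl, hf, hsum⟩
    obtain ⟨B, u, w, c, ⟨m, hB⟩, hatom, rfl⟩ := exists_eq_consPairFactorization hg hhg hhng hf hsum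
    rw [sum_consPairFactorization, cons_add, cons_inj_right] at hsum
    rcases hB with rfl | rfl
    · rw [← add_assoc, ← replicate_add, replicate_add_replicate_inj hg] at hsum
      exact Or.inl ⟨m, hatom, u, w, c, hsum.1, hsum.2, card_consPairFactorization _ _ _ _ _⟩
    · rw [add_left_comm, ← replicate_add, replicate_add_replicate_inj hg] at hsum
      exact Or.inr ⟨m, hatom, u, w, c, hsum.1, hsum.2, card_consPairFactorization _ _ _ _ _⟩
  · have hmem : ∀ B u w c, IsMinZeroSum (h ::ₘ B) →
        B + (replicate (u + w * addOrderOf g) g + replicate (u + c * addOrderOf g) (-g)) =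
          replicate a g + replicate b (-g) →
        1 + (u + w + c) ∈ lengthSet (h ::ₘ (replicate a g + replicate b (-g))) :=
      fun B u w c hB hsum => ⟨_, card_consPairFactorization _ _ u w c,
        fun _ hC => isMinZeroSum_of_mem_consPairFactorization hg hN hB hC,
        by rw [sum_consPairFactorization, cons_add, hsum]⟩
    rintro (⟨m, hatom, u, w, c, ha, hb, rfl⟩ | ⟨m, hatom, u, w, c, ha, hb, rfl⟩)
    · exact hmem _ u w c hatom (by rw [← add_assoc, ← replicate_add, ha, hb])
    · exact hmem _ u w c hatom (by rw [add_left_comm, ← replicate_add, ha, hb])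

end Factorizations

-- The lengths `1 + (u + w + c)` of the factorizations whose atom through `h = (d - 1) • g` is
-- `h g^(n - (d - 1))`, resp. `h (-g)^(d - 1)`.
theorem exists_length_of_counts_iff₁ {n d k L : ℕ} (hd : 2 ≤ d) (hdn : d ≤ n) :
    (∃ u w c, n - (d - 1) + (u + w * n) = (k + 1) * n ∧ u + c * n = d - 1 + k * n ∧
      L = 1 + (u + w + c)) ↔ ∃ ν ≤ k, L = 2 * k + 2 + (d - 2) + ν * (n - 2) := by
  have hν : ∀ ν, ν * (n - 2) + 2 * ν = ν * n := fun ν => by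
    rw [mul_comm 2 ν, ← mul_add, Nat.sub_add_cancel (by omega)]
  constructor
  · rintro ⟨u, w, c, hpos, hneg, rfl⟩
    have hk := add_one_mul k n
    obtain rfl : w = c := Nat.eq_of_mul_eq_mul_right (by omega : 0 < n) (by omega)
    have hwk : w ≤ k := by
      by_contra! h
      have : (k + 1) * n ≤ _ * n := Nat.mul_le_mul_right n h
      omega
    obtain ⟨ν, rfl⟩ := Nat.exists_eq_add_of_le hwk
    have := add_mul w ν n
    have := hν ν
    exact ⟨ν, by omega, by omega⟩
  · rintro ⟨ν, hνk, rfl⟩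
    obtain ⟨w, rfl⟩ := Nat.exists_eq_add_of_le hνk
    have := add_mul ν w n
    have := add_one_mul (ν + w) n
    have := hν ν
    exact ⟨ν * n + (d - 1), w, w, by omega, by omega, by omega⟩

theorem exists_length_of_counts_iff₂ {n k L : ℕ} (hn : 2 ≤ n) :
    (∃ u w c, u + w * n = (k + 1) * n ∧ u + c * n = k * n ∧ L = 1 + (u + w + c)) ↔
      ∃ ν ≤ k, L = 2 * k + 2 + ν * (n - 2) := by
  have hν : ∀ ν, ν * (n - 2) + 2 * ν = ν * n := fun ν => by
    rw [mul_comm 2 ν, ← mul_add, Nat.sub_add_cancel hn]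
  constructor
  · rintro ⟨u, w, c, hpos, hneg, rfl⟩
    have hk := add_one_mul k n
    obtain rfl : w = c + 1 :=
      Nat.eq_of_mul_eq_mul_right (by omega : 0 < n) (by rw [add_one_mul]; omega)
    have hck : c ≤ k := by
      by_contra! h
      have : (k + 1) * n ≤ _ * n := Nat.mul_le_mul_right n h
      omega
    obtain ⟨ν, rfl⟩ := Nat.exists_eq_add_of_le hck
    have := add_mul c ν n
    have := hν ν
    exact ⟨ν, by omega, by omega⟩
  · rintro ⟨ν, hνk, rfl⟩
    obtain ⟨c, rfl⟩ := Nat.exists_eq_add_of_le hνk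
    have := add_mul ν c n
    have := add_one_mul (ν + c) n
    have := add_one_mul c n
    have := hν ν
    exact ⟨ν * n, c + 1, c, by omega, by omega, by omega⟩

theorem mem_lengthSystem_of_addOrderOf_eq {G : Type*} [AddCommGroup G] {g : G} {n d : ℕ}
    (hord : addOrderOf g = n) (hd : 3 ≤ d) (hdn : d < n) (k : ℕ) :
    {x : ℕ | ∃ i ∈ ({0, d - 2} : Set ℕ), ∃ ν : ℕ, ν ≤ k ∧ x = 2 * k + 2 + i + ν * (n - 2)} ∈
      lengthSystem G := by
  have hN : 0 < addOrderOf g := by omega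
  have hg : g ≠ -g := fun h => by
    have : addOrderOf g ≤ 2 := addOrderOf_le_of_nsmul_eq_zero two_pos
      (by rw [two_nsmul]; nth_rw 2 [h]; exact add_neg_cancel g)
    omega
  have hhg : (d - 1) • g ≠ g := fun h => by
    have := nsmul_injOn_Iio_addOrderOf (x := g) (x₁ := d - 1) (x₂ := 1)
      (by simp; omega) (by simp; omega) (by simp [h])
    omega
  have hhng : (d - 1) • g ≠ -g := fun h => by
    have : addOrderOf g ≤ d := addOrderOf_le_of_nsmul_eq_zero (by omega)
      (by rw [show d = d - 1 + 1 by omega, succ_nsmul, h, neg_add_cancel])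
    omega
  have hV₁ (m : ℕ) : IsMinZeroSum ((d - 1) • g ::ₘ replicate m g) ↔ m = n - (d - 1) :=
    isMinZeroSum_cons_replicate_iff_eq hhg (by omega)
      (by rw [← add_nsmul, Nat.sub_add_cancel (by omega), ← hord, addOrderOf_nsmul_eq_zero])
  have hV₂ (m : ℕ) : IsMinZeroSum ((d - 1) • g ::ₘ replicate m (-g)) ↔ m = d - 1 :=
    isMinZeroSum_cons_replicate_iff_eq hhng (by rw [addOrderOf_neg]; omega)
      (by rw [neg_nsmul, neg_add_cancel])
  refine ⟨(d - 1) • g ::ₘ (replicate ((k + 1) * n) g + replicate (d - 1 + k * n) (-g)), ?_, ?_⟩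
  · simp [sum_replicate, add_nsmul, mul_nsmul, ← hord]
  · ext L
    rw [mem_lengthSet_cons_replicate_add_replicate_iff hg hN hhg hhng]
    simp only [hV₁, hV₂, exists_eq_left, hord, Nat.add_left_cancel_iff,
      exists_length_of_counts_iff₁ (by omega : 2 ≤ d) hdn.le,
      exists_length_of_counts_iff₂ (by omega : 2 ≤ n)]
    simp [or_comm, or_and_right, exists_or]

theorem stmt_8_general (G : Type*) [AddCommGroup G] (n : ℕ) (hcyc : IsAddCyclic G)
    (hcard : Nat.card G = n) (d : ℕ) (hd₁ : 3 ≤ d) (hd₂ : d ≤ n - 1)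
    (k : ℕ) :
    {x : ℕ | ∃ i ∈ ({0, d - 2} : Set ℕ),
        ∃ ν : ℕ, ν ≤ k ∧ x = 2 * k + 2 + i + ν * (n - 2)}
      ∈ lengthSystem G := by
  obtain ⟨g, hg⟩ := IsAddCyclic.exists_generator (α := G)
  have hord : addOrderOf g = n := by
    rw [addOrderOf_eq_card_of_forall_mem_zmultiples hg, hcard]
  exact mem_lengthSystem_of_addOrderOf_eq hord hd₁ (by omega) k

/-- **Proposition 3.6.1.** Let `G` be cyclic of order `n ≥ 4` and `d ∈ [3, n-1]`. For each
`k ∈ ℕ₀`, the set `(2k+2) + {0, d-2} + {ν(n-2) : ν ∈ [0,k]}` lies in `𝓛(G)`. -/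
theorem stmt_8 (G : Type*) [AddCommGroup G] (n : ℕ) (hcyc : IsAddCyclic G)
    (hcard : Nat.card G = n) (hn : 4 ≤ n) (d : ℕ) (hd₁ : 3 ≤ d) (hd₂ : d ≤ n - 1)
    (k : ℕ) :
    {x : ℕ | ∃ i ∈ ({0, d - 2} : Set ℕ),
        ∃ ν : ℕ, ν ≤ k ∧ x = 2 * k + 2 + i + ν * (n - 2)}
      ∈ lengthSystem G :=
  stmt_8_general G n hcyc hcard d hd₁ hd₂ k
end

section
/- Let G be a finite abelian group, g ∈ G with ord(g) = n ≥ 5, and B ∈ ℬ(G) such that both g and −g occur in B with multiplicity at least 2n. Suppose 𝖫(B) is an AAMP with difference n−2 and period {0, d, n−2} for some d ∈ [1, n−3] with d ≠ (n−2)/2 and some bound M ∈ ℕ₀. Then: (1) every submultiset S of B that is an atom of ℬ_{⟨g⟩}(G) satisfies σ(S) ∈ {0, g, −g, (d+1)g, −(d+1)g}; (2) if S₁ and S₂ are atoms of ℬ_{⟨g⟩}(G) whose union is a submultiset of B, then σ(S_i) ∈ {0, g, −g} for at least one i ∈ {1, 2}. -/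
/-!
An atom `S` of `ℬ_⟨g⟩(G)` with `σ(S) = j g`, `0 < j < n`, that avoids `±g` completes to the
atoms `S (-g)^j` and `S g^(n-j)` of `ℬ(G)`, so `S (-g)^j g^n` has factorizations of lengths `2`
and `j + 1`. As `B` contains `2n` copies of each of `±g`, both lengths reappear in `𝖫(B)` after
a common shift. The AAMP hypothesis puts all of `𝖫(B)` into the two classes `y, y + d` modulo
`n - 2`, so `j - 1 ≡ 0, ±d`, which leaves `σ(S) ∈ {±g, ±(d+1)g}`. For two atoms with
`j₁ - 1, j₂ - 1 ≡ ±d`, the four combined factorizations give lengths `a, a + ε₁, a + ε₂,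
a + ε₁ + ε₂`; since `d, 2d ≢ 0 mod n - 2`, three of them lie in distinct classes.
-/

open Multiset AddSubgroup

section Multisets

variable {α : Type*}

theorem Multiset.add_le_of_disjoint {s t u : Multiset α} (h : Disjoint s t) (hs : s ≤ u)
    (ht : t ≤ u) : s + t ≤ u := by
  classical
  rw [add_eq_union_iff_disjoint.2 h]
  exact union_le hs ht

theorem Multiset.disjoint_replicate_of_not_mem {s : Multiset α} {a : α} (ha : a ∉ s) (k : ℕ) :
    Disjoint s (replicate k a) :=
  disjoint_left.2 fun hx hx' => ha (eq_of_mem_replicate hx' ▸ hx)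

theorem Multiset.add_replicate_add_replicate_le {s t : Multiset α} {a b : α} {i k : ℕ}
    (hab : a ≠ b) (hs : s ≤ t) (ha : a ∉ s) (hb : b ∉ s) (hi : replicate i a ≤ t)
    (hk : replicate k b ≤ t) : s + replicate i a + replicate k b ≤ t := by
  rw [add_assoc]
  refine add_le_of_disjoint ?_ hs (add_le_of_disjoint ?_ hi hk)
  · exact disjoint_add_right.2
      ⟨disjoint_replicate_of_not_mem ha i, disjoint_replicate_of_not_mem hb k⟩
  · exact disjoint_replicate_of_not_mem (fun h => hab (eq_of_mem_replicate h).symm) k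

theorem Multiset.exists_le_le_eq_add_of_le_add {s t u : Multiset α} (h : s ≤ t + u) :
    ∃ s₁ ≤ t, ∃ s₂ ≤ u, s = s₁ + s₂ := by
  classical
  refine ⟨s ∩ t, inter_le_right, s - s ∩ t, ?_, (add_tsub_cancel_of_le inter_le_left).symm⟩
  rw [le_iff_count]
  intro a
  have := count_le_of_le a h
  rw [count_add] at this
  rw [count_sub, count_inter]
  omega

end Multisets

section AddCommGroup

variable {G : Type*} [AddCommGroup G]

section Lengths

theorem IsMinZeroSum.of_forall_le {A : Multiset G} (h0 : A ≠ 0) (hs : A.sum = 0)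
    (hmin : ∀ T ≤ A, T.sum = 0 → T = 0 ∨ T = A) : IsMinZeroSum A := by
  refine ⟨h0, hs, ?_⟩
  rintro ⟨C, D, hC, hD, hCs, -, rfl⟩
  rcases hmin C (le_add_right _ _) hCs with h | h
  · exact hC h
  · exact hD (left_eq_add.1 h)

theorem IsMinZeroSum.one_mem_lengthSet {A : Multiset G} (h : IsMinZeroSum A) :
    1 ∈ lengthSet A :=
  ⟨{A}, card_singleton A, by simpa using h, sum_singleton A⟩

theorem add_mem_lengthSet_add {A C : Multiset G} {k l : ℕ} (hk : k ∈ lengthSet A)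
    (hl : l ∈ lengthSet C) : k + l ∈ lengthSet (A + C) := by
  obtain ⟨f, rfl, hf, rfl⟩ := hk
  obtain ⟨f', rfl, hf', rfl⟩ := hl
  exact ⟨f + f', card_add f f', fun B hB => (mem_add.1 hB).elim (hf B) (hf' B), sum_add f f'⟩

theorem mul_mem_lengthSet_nsmul {A : Multiset G} {k : ℕ} (hk : k ∈ lengthSet A) (j : ℕ) :
    j * k ∈ lengthSet (j • A) := by
  induction j with
  | zero => exact ⟨0, by simp, by simp, by simp⟩
  | succ j ih => simpa [succ_nsmul, add_mul] using add_mem_lengthSet_add ih hk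

theorem sum_eq_zero_of_mem_lengthSet {A : Multiset G} {k : ℕ} (hk : k ∈ lengthSet A) :
    A.sum = 0 := by
  obtain ⟨f, -, hf, rfl⟩ := hk
  induction f using Multiset.induction_on with
  | empty => simp
  | cons B f ih =>
    rw [sum_cons, sum_add, (hf B (mem_cons_self B f)).2.1,
      ih fun C hC => hf C (mem_cons_of_mem hC), add_zero]

theorem lengthSet_nonempty {A : Multiset G} (hA : A.sum = 0) : (lengthSet A).Nonempty := by
  induction A using Multiset.strongInductionOn with
  | _ A ih =>
    by_cases hatom : IsMinZeroSum A
    · exact ⟨1, hatom.one_mem_lengthSet⟩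
    by_cases h0 : A = 0
    · exact ⟨0, 0, rfl, by simp, by simp [h0]⟩
    obtain ⟨C, D, hC, hD, hCs, hDs, rfl⟩ :
        ∃ C D : Multiset G, C ≠ 0 ∧ D ≠ 0 ∧ C.sum = 0 ∧ D.sum = 0 ∧ A = C + D := by
      by_contra h
      exact hatom ⟨h0, hA, h⟩
    obtain ⟨k, hk⟩ := ih C (lt_add_of_pos_right C (pos_iff_ne_zero.2 hD)) hCs
    obtain ⟨l, hl⟩ := ih D (lt_add_of_pos_left D (pos_iff_ne_zero.2 hC)) hDs
    exact ⟨k + l, add_mem_lengthSet_add hk hl⟩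

theorem exists_add_mem_lengthSet_of_le {X B : Multiset G} (hXB : X ≤ B) (hX : X.sum = 0)
    (hB : B.sum = 0) : ∃ l, ∀ k ∈ lengthSet X, k + l ∈ lengthSet B := by
  obtain ⟨C, rfl⟩ := Multiset.le_iff_exists_add.1 hXB
  obtain ⟨l, hl⟩ := lengthSet_nonempty (show C.sum = 0 by simpa [hX] using hB)
  exact ⟨l, fun k hk => add_mem_lengthSet_add hk hl⟩

end Lengths

section RelativeAtoms

theorem nsmul_eq_neg_nsmul_of_add_eq {g : G} {a b n : ℕ} (hn : n • g = 0) (h : a + b = n) :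
    a • g = -(b • g) :=
  eq_neg_of_add_eq_zero_left (by rw [← add_nsmul, h, hn])

theorem exists_nsmul_eq_of_mem_zmultiples {g x : G} (hg : 0 < addOrderOf g)
    (hx : x ∈ zmultiples g) : ∃ j < addOrderOf g, j • g = x := by
  classical
  simpa using (addOrderOf_pos_iff.1 hg).mem_zmultiples_iff_mem_range_addOrderOf.1 hx

theorem neg_ne_self_of_two_lt_addOrderOf {g : G} (h : 2 < addOrderOf g) : -g ≠ g := by
  intro hg
  have : 2 • g = 0 := by rw [two_nsmul, ← neg_eq_iff_add_eq_zero.1 hg]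
  exact absurd (addOrderOf_le_of_nsmul_eq_zero two_pos this) (by omega)

theorem isAtomRel_singleton {K : AddSubgroup G} {x : G} (hx : x ∈ K) : IsAtomRel K {x} :=
  ⟨singleton_ne_zero x, by simpa using hx,
    fun _ hT h0 hne => (le_singleton.1 hT).elim (absurd · h0) (absurd · hne)⟩

theorem IsAtomRel.eq_singleton_of_mem {K : AddSubgroup G} {S : Multiset G} (hS : IsAtomRel K S)
    {x : G} (hx : x ∈ S) (hxK : x ∈ K) : S = {x} := by
  by_contra hne
  exact hS.2.2 {x} (singleton_le.2 hx) (singleton_ne_zero x) (Ne.symm hne) (by simpa using hxK)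

variable {g : G} {S : Multiset G}

theorem IsAtomRel.isMinZeroSum_add_replicate_neg (hS : IsAtomRel (zmultiples g) S) {j : ℕ}
    (hj : j < addOrderOf g) (hsum : S.sum = j • g) :
    IsMinZeroSum (S + replicate j (-g)) := by
  refine .of_forall_le (by simp [hS.1]) (by simp [hsum]) fun T hT hTs => ?_
  obtain ⟨T₁, h₁, T₂, h₂, rfl⟩ := exists_le_le_eq_add_of_le_add hT
  obtain ⟨i, hij, rfl⟩ := le_replicate_iff.1 h₂
  have hT₁ : T₁.sum = i • g := by simpa [add_neg_eq_zero] using hTs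
  have hi : i < addOrderOf g := hij.trans_lt hj
  rcases eq_or_ne T₁ 0 with rfl | h0
  · left
    have : i = 0 := nsmul_injOn_Iio_addOrderOf hi (hi.trans_le' (Nat.zero_le i))
      (by simpa using hT₁.symm)
    simp [this]
  · rcases eq_or_ne T₁ S with rfl | hne
    · right
      rw [nsmul_injOn_Iio_addOrderOf hi hj (hT₁.symm.trans hsum)]
    · exact absurd (hT₁ ▸ nsmul_mem (mem_zmultiples g) i) (hS.2.2 T₁ h₁ h0 hne)

theorem IsAtomRel.isMinZeroSum_add_replicate (hS : IsAtomRel (zmultiples g) S) {j : ℕ}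
    (hj0 : 0 < j) (hj : j < addOrderOf g) (hsum : S.sum = j • g) :
    IsMinZeroSum (S + replicate (addOrderOf g - j) g) := by
  have hS' : IsAtomRel (zmultiples (-g)) S := zmultiples_neg (g := g) ▸ hS
  simpa using hS'.isMinZeroSum_add_replicate_neg (j := addOrderOf g - j)
    (by rw [addOrderOf_neg]; omega) (by
      rw [hsum, neg_nsmul, nsmul_eq_neg_nsmul_of_add_eq (addOrderOf_nsmul_eq_zero g)
        (Nat.add_sub_cancel' hj.le)])

-- `S (-g)^j g^n` factors both as `(S (-g)^j) · g^n` and as `(S g^(n-j)) · (g (-g))^j`.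
theorem IsAtomRel.mem_lengthSet_add_replicate (hS : IsAtomRel (zmultiples g) S) {j : ℕ}
    (hj0 : 0 < j) (hj : j < addOrderOf g) (hsum : S.sum = j • g) :
    2 ∈ lengthSet (S + replicate j (-g) + replicate (addOrderOf g) g) ∧
      j + 1 ∈ lengthSet (S + replicate j (-g) + replicate (addOrderOf g) g) := by
  have hg : IsAtomRel (zmultiples g) {g} := isAtomRel_singleton (mem_zmultiples g)
  have h1 : 1 < addOrderOf g := by omega
  have hU : IsMinZeroSum (replicate (addOrderOf g) g) := by
    simpa [← replicate_succ, Nat.sub_add_cancel h1.le] using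
      hg.isMinZeroSum_add_replicate one_pos h1 (by simp)
  have hV : IsMinZeroSum ({g} + replicate 1 (-g)) :=
    hg.isMinZeroSum_add_replicate_neg h1 (by simp)
  refine ⟨add_mem_lengthSet_add (hS.isMinZeroSum_add_replicate_neg hj hsum).one_mem_lengthSet
    hU.one_mem_lengthSet, ?_⟩
  have := add_mem_lengthSet_add
    (hS.isMinZeroSum_add_replicate hj0 hj hsum).one_mem_lengthSet
    (mul_mem_lengthSet_nsmul hV.one_mem_lengthSet j)
  rw [mul_one, add_comm 1, nsmul_add, nsmul_singleton, nsmul_replicate, mul_one] at this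
  convert this using 2
  conv_lhs => rw [← Nat.sub_add_cancel hj.le, replicate_add]
  abel

end RelativeAtoms

section Residues

theorem IsAAMP.exists_forall_intCast_eq {d M : ℕ} {D : Set ℕ} {L : Set ℤ}
    (h : IsAAMP d D M L) : ∃ y : ZMod d, ∀ x ∈ L, ∃ e ∈ D, (x : ZMod d) = y + e := by
  obtain ⟨-, -, -, -, y, L', Lstar, L'', b, -, -, hLstar, -, -, hper, rfl⟩ := h
  refine ⟨y, ?_⟩
  rintro _ ⟨x, hx, rfl⟩
  obtain ⟨e, he, q, rfl⟩ : ∃ e ∈ D, ∃ q : ℤ, x = e + q * d := by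
    rcases hx with (hx | hx) | hx
    · exact hper x (.inl hx)
    · exact (hLstar ▸ hx).1
    · exact hper x (.inr hx)
  exact ⟨e, he, by simp⟩

variable {H : Type*} [AddCommGroup H]

theorem sub_mem_of_mem_pair {y δ a b : H} (ha : a ∈ ({y, y + δ} : Set H))
    (hb : b ∈ ({y, y + δ} : Set H)) : b - a ∈ ({0, δ, -δ} : Set H) := by
  rcases ha with rfl | rfl <;> rcases hb with rfl | rfl <;> simp

theorem eq_or_eq_or_eq_of_mem_pair {α : Type*} {p q x y z : α} (hx : x ∈ ({p, q} : Set α))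
    (hy : y ∈ ({p, q} : Set α)) (hz : z ∈ ({p, q} : Set α)) : x = y ∨ y = z ∨ x = z := by
  rcases hx with rfl | rfl <;> rcases hy with rfl | rfl <;> rcases hz with rfl | rfl <;> simp

-- Three of the four points are pairwise distinct, but there are only two classes.
theorem false_of_mem_pair {y δ a ε₁ ε₂ : H} (hδ : δ ≠ 0) (h2δ : δ + δ ≠ 0)
    (hε₁ : ε₁ ∈ ({δ, -δ} : Set H)) (hε₂ : ε₂ ∈ ({δ, -δ} : Set H))
    (h₀ : a ∈ ({y, y + δ} : Set H)) (h₁ : a + ε₁ ∈ ({y, y + δ} : Set H))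
    (h₂ : a + ε₂ ∈ ({y, y + δ} : Set H)) (h₁₂ : a + ε₁ + ε₂ ∈ ({y, y + δ} : Set H)) : False := by
  have h2δ' : -δ + -δ ≠ 0 := by rwa [← neg_add, neg_ne_zero]
  rcases hε₁ with rfl | rfl <;> rcases hε₂ with rfl | rfl
  · rcases eq_or_eq_or_eq_of_mem_pair h₀ h₁ h₁₂ with h | h | h <;>
      simp [add_assoc, hδ, h2δ] at h
  · rcases eq_or_eq_or_eq_of_mem_pair h₁ h₀ h₂ with h | h | h <;>
      simp [hδ, h2δ, eq_neg_iff_add_eq_zero] at h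
  · rcases eq_or_eq_or_eq_of_mem_pair h₁ h₀ h₂ with h | h | h <;>
      simp [hδ, h2δ, neg_eq_iff_add_eq_zero] at h
  · rcases eq_or_eq_or_eq_of_mem_pair h₀ h₁ h₁₂ with h | h | h <;>
      simp [add_assoc, hδ, h2δ'] at h

theorem eq_of_intCast_eq_intCast {m : ℕ} {a b : ℤ} (h : (a : ZMod m) = b) (hab : |a - b| < m) :
    a = b :=
  sub_eq_zero.1 (Int.eq_zero_of_abs_lt_dvd ((ZMod.intCast_eq_intCast_iff_dvd_sub b a m).1 h.symm)
    hab)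

variable {m j : ℕ}

theorem eq_one_or_eq_of_natCast_sub_one_eq_zero (hj0 : 0 < j) (hj : j ≤ m + 1)
    (h : (j : ZMod m) - 1 = 0) : j = 1 ∨ j = m + 1 := by
  by_cases hjm : j ≤ m
  · have := eq_of_intCast_eq_intCast (m := m) (a := j - 1) (b := 0) (by push_cast; exact h)
      (by rw [abs_lt]; omega)
    omega
  · omega

theorem eq_add_one_of_natCast_sub_one_eq {d : ℕ} (hd0 : 0 < d) (hd : d < m) (hj0 : 0 < j)
    (hj : j ≤ m + 1) (h : (j : ZMod m) - 1 = d) : j = d + 1 := by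
  have := eq_of_intCast_eq_intCast (m := m) (a := j - 1) (b := d) (by push_cast; exact h)
    (by rw [abs_lt]; omega)
  omega

theorem add_eq_of_natCast_sub_one_eq_neg {d : ℕ} (hd0 : 0 < d) (hd : d < m) (hj0 : 0 < j)
    (hj : j ≤ m + 1) (h : (j : ZMod m) - 1 = -d) : j + d = m + 1 := by
  have := eq_of_intCast_eq_intCast (m := m) (a := j - 1) (b := m - d) (by push_cast; simp [h])
    (by rw [abs_lt]; omega)
  omega

end Residues

section LengthsOfB

variable {g : G} {B : Multiset G} {m : ℕ} {y δ : ZMod m}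

theorem IsAtomRel.exists_nsmul_eq {S : Multiset G} (hS : IsAtomRel (zmultiples g) S)
    (hg : 0 < addOrderOf g) (hsum : S.sum ∉ ({0, g, -g} : Set G)) :
    ∃ j, 0 < j ∧ j < addOrderOf g ∧ S.sum = j • g ∧ g ∉ S ∧ -g ∉ S := by
  obtain ⟨j, hj, hjg⟩ := exists_nsmul_eq_of_mem_zmultiples hg hS.2.1
  refine ⟨j, Nat.pos_of_ne_zero ?_, hj, hjg.symm, fun h => hsum ?_, fun h => hsum ?_⟩
  · rintro rfl
    exact hsum (by simp [← hjg])
  · simp [hS.eq_singleton_of_mem h (mem_zmultiples g)]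
  · simp [hS.eq_singleton_of_mem h (neg_mem (mem_zmultiples g))]

variable (hord : addOrderOf g = m + 2) (hB : B.sum = 0)
  (hg : replicate (2 * (m + 2)) g ≤ B) (hg' : replicate (2 * (m + 2)) (-g) ≤ B)
  (hres : ∀ k ∈ lengthSet B, (k : ZMod m) ∈ ({y, y + δ} : Set (ZMod m)))
include hord hB hg hg' hres

theorem natCast_sub_one_mem_of_isAtomRel (hm : 0 < m) {S : Multiset G} {j : ℕ} (hSB : S ≤ B)
    (hS : IsAtomRel (zmultiples g) S) (hj0 : 0 < j) (hj : j < m + 2) (hsum : S.sum = j • g)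
    (hgS : g ∉ S) (hgS' : -g ∉ S) : (j : ZMod m) - 1 ∈ ({0, δ, -δ} : Set (ZMod m)) := by
  rw [← hord] at hj hg hg'
  have hX := add_replicate_add_replicate_le (neg_ne_self_of_two_lt_addOrderOf (by omega)) hSB
    hgS' hgS (((replicate_le_replicate (-g)).2 (show j ≤ 2 * addOrderOf g by omega)).trans hg')
    (((replicate_le_replicate g).2 (show addOrderOf g ≤ 2 * addOrderOf g by omega)).trans hg)
  obtain ⟨h2, hj1⟩ := hS.mem_lengthSet_add_replicate hj0 hj hsum
  obtain ⟨l, hl⟩ := exists_add_mem_lengthSet_of_le hX (sum_eq_zero_of_mem_lengthSet h2) hB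
  convert sub_mem_of_mem_pair (hres _ (hl _ h2)) (hres _ (hl _ hj1)) using 1
  push_cast
  ring

theorem false_of_isAtomRel_of_isAtomRel (hm : 0 < m) (hδ : δ ≠ 0) (h2δ : δ + δ ≠ 0)
    {S₁ S₂ : Multiset G} {j₁ j₂ : ℕ} (hSB : S₁ + S₂ ≤ B)
    (hS₁ : IsAtomRel (zmultiples g) S₁) (hS₂ : IsAtomRel (zmultiples g) S₂)
    (hj₁0 : 0 < j₁) (hj₁ : j₁ < m + 2) (hsum₁ : S₁.sum = j₁ • g)
    (hj₂0 : 0 < j₂) (hj₂ : j₂ < m + 2) (hsum₂ : S₂.sum = j₂ • g)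
    (hgS : g ∉ S₁ + S₂) (hgS' : -g ∉ S₁ + S₂)
    (he₁ : (j₁ : ZMod m) - 1 ∈ ({δ, -δ} : Set (ZMod m)))
    (he₂ : (j₂ : ZMod m) - 1 ∈ ({δ, -δ} : Set (ZMod m))) : False := by
  rw [← hord] at hj₁ hj₂ hg hg'
  obtain ⟨h₁, h₁'⟩ := hS₁.mem_lengthSet_add_replicate hj₁0 hj₁ hsum₁
  obtain ⟨h₂, h₂'⟩ := hS₂.mem_lengthSet_add_replicate hj₂0 hj₂ hsum₂
  have hX := add_replicate_add_replicate_le (neg_ne_self_of_two_lt_addOrderOf (by omega)) hSB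
    hgS' hgS (((replicate_le_replicate (-g)).2 (show j₁ + j₂ ≤ 2 * addOrderOf g by omega)).trans
      hg') hg
  rw [two_mul, replicate_add, replicate_add] at hX
  obtain ⟨l, hl⟩ := exists_add_mem_lengthSet_of_le
    (X := S₁ + replicate j₁ (-g) + replicate (addOrderOf g) g +
      (S₂ + replicate j₂ (-g) + replicate (addOrderOf g) g)) (by convert hX using 1; abel)
    (by rw [sum_add, sum_eq_zero_of_mem_lengthSet h₁, sum_eq_zero_of_mem_lengthSet h₂, add_zero])
    hB
  have hP := fun k₁ (hk₁ : k₁ ∈ lengthSet _) k₂ (hk₂ : k₂ ∈ lengthSet _) =>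
    hres _ (hl _ (add_mem_lengthSet_add hk₁ hk₂))
  refine false_of_mem_pair hδ h2δ he₁ he₂ (hP _ h₁ _ h₂) ?_ ?_ ?_
  · convert hP _ h₁' _ h₂ using 1
    push_cast
    ring
  · convert hP _ h₁ _ h₂' using 1
    push_cast
    ring
  · convert hP _ h₁' _ h₂' using 1
    push_cast
    ring

end LengthsOfB

section LengthsOfBModD

variable {g : G} {B : Multiset G} {m d : ℕ} {y : ZMod m}
  (hord : addOrderOf g = m + 2) (hB : B.sum = 0)
  (hg : replicate (2 * (m + 2)) g ≤ B) (hg' : replicate (2 * (m + 2)) (-g) ≤ B)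
  (hres : ∀ k ∈ lengthSet B, (k : ZMod m) ∈ ({y, y + d} : Set (ZMod m)))
  (hd0 : 0 < d) (hdm : d < m)
include hord hB hg hg' hres hd0 hdm

theorem IsAtomRel.exists_natCast_sub_one_mem {S : Multiset G} (hSB : S ≤ B)
    (hS : IsAtomRel (zmultiples g) S) (hsum : S.sum ∉ ({0, g, -g} : Set G)) :
    ∃ j, 0 < j ∧ j < m + 2 ∧ S.sum = j • g ∧ g ∉ S ∧ -g ∉ S ∧
      (j : ZMod m) - 1 ∈ ({(d : ZMod m), -(d : ZMod m)} : Set (ZMod m)) := by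
  obtain ⟨j, hj0, hj, hjg, hgS, hgS'⟩ := hS.exists_nsmul_eq (by omega) hsum
  rw [hord] at hj
  refine ⟨j, hj0, hj, hjg, hgS, hgS', ?_⟩
  rcases natCast_sub_one_mem_of_isAtomRel hord hB hg hg' hres (by omega) hSB hS hj0 hj hjg hgS
    hgS' with he | he
  · rcases eq_one_or_eq_of_natCast_sub_one_eq_zero hj0 (by omega) he with rfl | rfl
    · simp [hjg] at hsum
    · simp [hjg, nsmul_eq_neg_nsmul_of_add_eq (hord ▸ addOrderOf_nsmul_eq_zero g)
        (show m + 1 + 1 = m + 2 from rfl)] at hsum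
  · exact he

theorem IsAtomRel.sum_mem_of_le {S : Multiset G} (hSB : S ≤ B)
    (hS : IsAtomRel (zmultiples g) S) :
    S.sum ∈ ({0, g, -g, (d + 1) • g, -((d + 1) • g)} : Set G) := by
  by_cases h : S.sum ∈ ({0, g, -g} : Set G)
  · simp only [Set.mem_insert_iff, Set.mem_singleton_iff] at h ⊢
    tauto
  obtain ⟨j, hj0, hj, hjg, -, -, he | he⟩ :=
    hS.exists_natCast_sub_one_mem hord hB hg hg' hres hd0 hdm hSB h
  · simp [hjg, eq_add_one_of_natCast_sub_one_eq hd0 hdm hj0 (by omega) he]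
  · have := add_eq_of_natCast_sub_one_eq_neg hd0 hdm hj0 (by omega) he
    simp [hjg, nsmul_eq_neg_nsmul_of_add_eq (hord ▸ addOrderOf_nsmul_eq_zero g)
      (show j + (d + 1) = m + 2 by omega)]

theorem sum_mem_or_sum_mem_of_add_le (h2d : 2 * d ≠ m) {S₁ S₂ : Multiset G} (hSB : S₁ + S₂ ≤ B)
    (hS₁ : IsAtomRel (zmultiples g) S₁) (hS₂ : IsAtomRel (zmultiples g) S₂) :
    S₁.sum ∈ ({0, g, -g} : Set G) ∨ S₂.sum ∈ ({0, g, -g} : Set G) := by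
  by_contra! ⟨h₁, h₂⟩
  obtain ⟨j₁, hj₁0, hj₁, hsum₁, hgS₁, hgS₁', he₁⟩ := hS₁.exists_natCast_sub_one_mem hord hB hg hg'
    hres hd0 hdm ((le_add_right S₁ S₂).trans hSB) h₁
  obtain ⟨j₂, hj₂0, hj₂, hsum₂, hgS₂, hgS₂', he₂⟩ := hS₂.exists_natCast_sub_one_mem hord hB hg hg'
    hres hd0 hdm ((le_add_left S₂ S₁).trans hSB) h₂
  have hd : (d : ZMod m) ≠ 0 := fun h =>
    (Nat.eq_zero_of_dvd_of_lt ((ZMod.natCast_eq_zero_iff d m).1 h) hdm).not_gt hd0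
  have h2d' : (d : ZMod m) + d ≠ 0 := fun h => h2d <| by
    rw [two_mul]
    exact Nat.eq_of_dvd_of_lt_two_mul (by omega)
      ((ZMod.natCast_eq_zero_iff _ m).1 (by push_cast; exact h)) (by omega)
  exact false_of_isAtomRel_of_isAtomRel hord hB hg hg' hres (by omega) hd h2d' hSB hS₁ hS₂
    hj₁0 hj₁ hsum₁ hj₂0 hj₂ hsum₂ (by simp [hgS₁, hgS₂]) (by simp [hgS₁', hgS₂']) he₁ he₂

end LengthsOfBModD

end AddCommGroup

theorem stmt_12_general (G : Type*) [AddCommGroup G] (g : G) (n : ℕ)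
    (hord : addOrderOf g = n)
    (B : Multiset G) (hB : B.sum = 0)
    (hg : Multiset.replicate (2 * n) g ≤ B)
    (hg' : Multiset.replicate (2 * n) (-g) ≤ B)
    (d M : ℕ) (hd₁ : 1 ≤ d) (hd₂ : d ≤ n - 3) (hd₃ : 2 * d ≠ n - 2)
    (hL : IsAAMP (n - 2) ({0, d, n - 2} : Set ℕ) M (natSetToInt (lengthSet B))) :
    (∀ S : Multiset G, S ≤ B → IsAtomRel (AddSubgroup.zmultiples g) S →
        S.sum ∈ ({0, g, -g, (d + 1) • g, -((d + 1) • g)} : Set G)) ∧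
    (∀ S₁ S₂ : Multiset G, S₁ + S₂ ≤ B →
        IsAtomRel (AddSubgroup.zmultiples g) S₁ →
        IsAtomRel (AddSubgroup.zmultiples g) S₂ →
        S₁.sum ∈ ({0, g, -g} : Set G) ∨ S₂.sum ∈ ({0, g, -g} : Set G)) := by
  obtain ⟨m, rfl⟩ : ∃ m, n = m + 2 := ⟨n - 2, by omega⟩
  rw [Nat.add_sub_cancel] at hL hd₃
  obtain ⟨y, hy⟩ := hL.exists_forall_intCast_eq
  have hres : ∀ k ∈ lengthSet B, (k : ZMod m) ∈ ({y, y + d} : Set (ZMod m)) := by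
    intro k hk
    obtain ⟨e, he, hke⟩ := hy k ⟨k, hk, rfl⟩
    rcases he with rfl | rfl | rfl <;> simp_all
  exact ⟨fun S hSB hS => hS.sum_mem_of_le hord hB hg hg' hres (by omega) (by omega) hSB,
    fun S₁ S₂ hSB hS₁ hS₂ =>
      sum_mem_or_sum_mem_of_add_le hord hB hg hg' hres (by omega) (by omega) hd₃ hSB hS₁ hS₂⟩

/-- **Proposition 3.8.** Let `G` be a finite abelian group, `g ∈ G` of order `n ≥ 5`, and
`B` a zero-sum sequence containing `g` and `-g` each with multiplicity at least `2n`.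
Suppose `𝖫(B)` is an AAMP with difference `n-2` and period `{0, d, n-2}` for some
`d ∈ [1, n-3]` with `d ≠ (n-2)/2`. Then: (1) every subsequence `S` of `B` which is an atom
of `ℬ_{⟨g⟩}(G)` has `σ(S) ∈ {0, g, -g, (d+1)g, -(d+1)g}`; (2) if `S₁, S₂` are atoms of
`ℬ_{⟨g⟩}(G)` with `S₁S₂ ∣ B`, then `σ(Sᵢ) ∈ {0, g, -g}` for at least one `i`. -/
theorem stmt_12 (G : Type*) [AddCommGroup G] [Finite G] (g : G) (n : ℕ)
    (hord : addOrderOf g = n) (hn : 5 ≤ n)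
    (B : Multiset G) (hB : B.sum = 0)
    (hg : Multiset.replicate (2 * n) g ≤ B)
    (hg' : Multiset.replicate (2 * n) (-g) ≤ B)
    (d M : ℕ) (hd₁ : 1 ≤ d) (hd₂ : d ≤ n - 3) (hd₃ : 2 * d ≠ n - 2)
    (hL : IsAAMP (n - 2) ({0, d, n - 2} : Set ℕ) M (natSetToInt (lengthSet B))) :
    (∀ S : Multiset G, S ≤ B → IsAtomRel (AddSubgroup.zmultiples g) S →
        S.sum ∈ ({0, g, -g, (d + 1) • g, -((d + 1) • g)} : Set G)) ∧
    (∀ S₁ S₂ : Multiset G, S₁ + S₂ ≤ B →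
        IsAtomRel (AddSubgroup.zmultiples g) S₁ →
        IsAtomRel (AddSubgroup.zmultiples g) S₂ →
        S₁.sum ∈ ({0, g, -g} : Set G) ∨ S₂.sum ∈ ({0, g, -g} : Set G)) :=
  stmt_12_general G g n hord B hB hg hg' d M hd₁ hd₂ hd₃ hL
end

section
/- Let G be a cyclic group of order n ≥ 7 and g ∈ G with ord(g) = n. For k ∈ ℕ, let A_k be the zero-sum sequence consisting of g with multiplicity nk, −g with multiplicity nk, and 2g with multiplicity n, if n is even; and of g with multiplicity nk+2, −g with multiplicity nk, and 2g with multiplicity n−1, if n is odd. Then there is a bound M ∈ ℕ such that for all k ≥ n−1, the set 𝖫(A_k) is an AAP with difference 1 and bound M, but 𝖫(A_k) is not an arithmetical progression with difference 1. -/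
/-!
Record a sequence `g^a (-g)^b (2g)^c` by its count triple `(a, b, c)`. When `g, -g, 2g` are
distinct this is faithful, and the sequence is zero-sum iff `n ∣ a + 2c - b`, so the
factorizations of `A_k` are the decompositions of its count triple into minimal zero-sum triples.
Apart from `(0,0,n)` for odd `n`, which does not fit into `A_k`, these are `(1,1,0)`,
`(0,2,1)`, `(0,n,0)`, `(n-2c,0,c)` and, for odd `n`, `(0,1,(n+1)/2)`. Explicit decompositions realise the length `2k+2` and every length
in `[2k+n, nk+2]`, and since atoms have between `2` and `n` elements every length lies within
`n` of that interval: an AAP with bound `n`. Counting the atoms of each shape in a factorization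
of length `2k+3` gives a small system of linear equations with no solution once `n ≥ 7`, so the
gap between `2k+2` and `2k+n` keeps `𝖫(A_k)` from being an arithmetical progression.
-/

open Multiset

def tripleWeight : ℕ × ℕ × ℕ →+ ℤ where
  toFun σ := σ.1 + 2 * σ.2.2 - σ.2.1
  map_zero' := by simp
  map_add' σ τ := by simp only [Prod.fst_add, Prod.snd_add]; push_cast; ring

def tripleSize : ℕ × ℕ × ℕ →+ ℕ where
  toFun σ := σ.1 + σ.2.1 + σ.2.2
  map_zero' := rfl
  map_add' σ τ := by simp only [Prod.fst_add, Prod.snd_add]; ring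

@[simp]
lemma tripleWeight_mk (a b c : ℕ) : tripleWeight (a, b, c) = a + 2 * c - b := rfl

@[simp]
lemma tripleSize_mk (a b c : ℕ) : tripleSize (a, b, c) = a + b + c := rfl

def IsMinZeroSumTriple (n : ℕ) (σ : ℕ × ℕ × ℕ) : Prop :=
  σ ≠ 0 ∧ (n : ℤ) ∣ tripleWeight σ ∧ ∀ ρ ≤ σ, (n : ℤ) ∣ tripleWeight ρ → ρ = 0 ∨ ρ = σ

def tripleLengthSet (n : ℕ) (τ : ℕ × ℕ × ℕ) : Set ℕ :=
  {l | ∃ t : Multiset (ℕ × ℕ × ℕ),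
    card t = l ∧ (∀ σ ∈ t, IsMinZeroSumTriple n σ) ∧ t.sum = τ}

section SeqOfCounts

variable {G : Type*} [AddCommGroup G]

def seqOfCounts (g : G) : ℕ × ℕ × ℕ →+ Multiset G where
  toFun σ := replicate σ.1 g + replicate σ.2.1 (-g) + replicate σ.2.2 ((2 : ℕ) • g)
  map_zero' := by simp
  map_add' σ τ := by simp only [Prod.fst_add, Prod.snd_add, replicate_add]; abel

@[simp]
lemma seqOfCounts_mk (g : G) (a b c : ℕ) :
    seqOfCounts g (a, b, c) = replicate a g + replicate b (-g) + replicate c ((2 : ℕ) • g) :=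
  rfl

lemma sum_seqOfCounts (g : G) (σ : ℕ × ℕ × ℕ) :
    (seqOfCounts g σ).sum = tripleWeight σ • g := by
  obtain ⟨a, b, c⟩ := σ
  simp only [seqOfCounts_mk, tripleWeight_mk, sum_add, sum_replicate, sub_zsmul, add_zsmul,
    mul_zsmul, natCast_zsmul, smul_neg]
  rw [smul_comm c 2 g]
  abel

lemma sum_seqOfCounts_eq_zero_iff (g : G) (σ : ℕ × ℕ × ℕ) :
    (seqOfCounts g σ).sum = 0 ↔ (addOrderOf g : ℤ) ∣ tripleWeight σ := by
  rw [sum_seqOfCounts, addOrderOf_dvd_iff_zsmul_eq_zero]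

lemma seqOfCounts_eq_zero_iff (g : G) (σ : ℕ × ℕ × ℕ) : seqOfCounts g σ = 0 ↔ σ = 0 := by
  obtain ⟨a, b, c⟩ := σ
  rw [← card_eq_zero]
  simp [Prod.ext_iff, and_assoc]

variable {g : G}

lemma nsmul_ne_zero_of_le_three (hg : 3 < addOrderOf g) {m : ℕ} (hm₀ : m ≠ 0) (hm : m ≤ 3) :
    m • g ≠ 0 := fun h => by
  have := Nat.le_of_dvd (by omega) (addOrderOf_dvd_of_nsmul_eq_zero h)
  omega

lemma self_ne_neg_self (hg : 3 < addOrderOf g) : g ≠ -g := fun h =>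
  nsmul_ne_zero_of_le_three hg two_ne_zero (by norm_num) <| by
    rw [two_nsmul]; nth_rw 2 [h]; exact add_neg_cancel g

lemma self_ne_two_nsmul (hg : 3 < addOrderOf g) : g ≠ (2 : ℕ) • g := fun h =>
  nsmul_ne_zero_of_le_three hg one_ne_zero (by norm_num) <| by
    rw [two_nsmul, left_eq_add] at h; simp [h]

lemma neg_ne_two_nsmul (hg : 3 < addOrderOf g) : -g ≠ (2 : ℕ) • g := fun h =>
  nsmul_ne_zero_of_le_three hg three_ne_zero le_rfl <| by
    rw [succ_nsmul, ← h, neg_add_cancel]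

section Counts

variable [DecidableEq G]

def countsOf (g : G) (S : Multiset G) : ℕ × ℕ × ℕ :=
  (S.count g, S.count (-g), S.count ((2 : ℕ) • g))

lemma countsOf_mono (g : G) {S T : Multiset G} (h : S ≤ T) : countsOf g S ≤ countsOf g T :=
  ⟨count_le_of_le _ h, count_le_of_le _ h, count_le_of_le _ h⟩

lemma count_seqOfCounts (g x : G) (σ : ℕ × ℕ × ℕ) :
    count x (seqOfCounts g σ) =
      (if g = x then σ.1 else 0) + (if -g = x then σ.2.1 else 0) +
        (if (2 : ℕ) • g = x then σ.2.2 else 0) := by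
  simp [seqOfCounts, count_replicate]

lemma countsOf_seqOfCounts (hg : 3 < addOrderOf g) (σ : ℕ × ℕ × ℕ) :
    countsOf g (seqOfCounts g σ) = σ := by
  simp [countsOf, count_seqOfCounts, self_ne_neg_self hg, self_ne_two_nsmul hg,
    neg_ne_two_nsmul hg, (self_ne_neg_self hg).symm, (self_ne_two_nsmul hg).symm,
    (neg_ne_two_nsmul hg).symm]

end Counts

lemma seqOfCounts_injective (hg : 3 < addOrderOf g) : Function.Injective (seqOfCounts g) := by
  classical
  exact Function.LeftInverse.injective (countsOf_seqOfCounts hg)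

lemma exists_eq_seqOfCounts_of_le (hg : 3 < addOrderOf g) {S : Multiset G}
    {τ : ℕ × ℕ × ℕ} (h : S ≤ seqOfCounts g τ) : ∃ σ ≤ τ, S = seqOfCounts g σ := by
  classical
  refine ⟨countsOf g S, countsOf_seqOfCounts hg τ ▸ countsOf_mono g h, ?_⟩
  have h₁ := self_ne_neg_self hg
  have h₂ := self_ne_two_nsmul hg
  have h₃ := neg_ne_two_nsmul hg
  ext x
  have hx := count_le_of_le x h
  rw [count_seqOfCounts] at hx ⊢
  by_cases hxg : x = g
  · subst hxg; simp [countsOf, h₁.symm, h₂.symm]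
  by_cases hxn : x = -g
  · subst hxn; simp [countsOf, h₁, h₃.symm]
  by_cases hx₂ : x = (2 : ℕ) • g
  · subst hx₂; simp [countsOf, h₂, h₃]
  · simpa [Ne.symm hxg, Ne.symm hxn, Ne.symm hx₂] using hx

lemma isMinZeroSum_seqOfCounts_iff (hg : 3 < addOrderOf g) (σ : ℕ × ℕ × ℕ) :
    IsMinZeroSum (seqOfCounts g σ) ↔ IsMinZeroSumTriple (addOrderOf g) σ := by
  simp only [IsMinZeroSum, IsMinZeroSumTriple, ne_eq, seqOfCounts_eq_zero_iff,
    sum_seqOfCounts_eq_zero_iff]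
  refine and_congr_right fun _ => and_congr_right fun hσ => ⟨fun hmin ρ hρ hdvd => ?_, ?_⟩
  · obtain ⟨δ, rfl⟩ := exists_add_of_le hρ
    by_contra! hne
    refine hmin ⟨seqOfCounts g ρ, seqOfCounts g δ, ?_, ?_, ?_, ?_, map_add _ _ _⟩
    · rw [seqOfCounts_eq_zero_iff]; exact hne.1
    · rw [seqOfCounts_eq_zero_iff]; rintro rfl; exact hne.2 (add_zero ρ).symm
    · exact (sum_seqOfCounts_eq_zero_iff g ρ).2 hdvd
    · rw [sum_seqOfCounts_eq_zero_iff]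
      rw [_root_.map_add] at hσ
      exact (dvd_add_right hdvd).1 hσ
  · rintro hmin ⟨B, C, hB, hC, hB₀, -, hBC⟩
    obtain ⟨ρ, hρ, rfl⟩ := exists_eq_seqOfCounts_of_le hg (hBC ▸ le_add_right B C)
    rcases hmin ρ hρ ((sum_seqOfCounts_eq_zero_iff g ρ).1 hB₀) with rfl | rfl
    · exact hB (_root_.map_zero _)
    · exact hC (by simpa using hBC)

theorem lengthSet_seqOfCounts (hg : 3 < addOrderOf g) (τ : ℕ × ℕ × ℕ) :
    lengthSet (seqOfCounts g τ) = tripleLengthSet (addOrderOf g) τ := by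
  classical
  ext l
  constructor
  · rintro ⟨f, rfl, hf, hsum⟩
    have hrepr : ∀ B ∈ f, seqOfCounts g (countsOf g B) = B := fun B hB => by
      obtain ⟨σ, -, rfl⟩ := exists_eq_seqOfCounts_of_le hg (hsum ▸ le_sum_of_mem hB)
      rw [countsOf_seqOfCounts hg]
    have hf' : (f.map (countsOf g)).map (seqOfCounts g) = f := by
      rw [map_map]; exact (map_congr rfl hrepr).trans (map_id' f)
    refine ⟨f.map (countsOf g), card_map _ _, fun σ hσ => ?_, seqOfCounts_injective hg ?_⟩
    · obtain ⟨B, hB, rfl⟩ := mem_map.1 hσ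
      rw [← isMinZeroSum_seqOfCounts_iff hg, hrepr B hB]
      exact hf B hB
    · rw [map_multiset_sum, hf', hsum]
  · rintro ⟨t, rfl, ht, rfl⟩
    refine ⟨t.map (seqOfCounts g), card_map _ _, fun B hB => ?_, (map_multiset_sum _ _).symm⟩
    obtain ⟨σ, hσ, rfl⟩ := mem_map.1 hB
    exact (isMinZeroSum_seqOfCounts_iff hg σ).2 (ht σ hσ)

end SeqOfCounts

section MinZeroSumTriple

variable {n : ℕ}

lemma isMinZeroSumTriple_mk_iff {a b c : ℕ} :
    IsMinZeroSumTriple n (a, b, c) ↔ ¬(a = 0 ∧ b = 0 ∧ c = 0) ∧ (n : ℤ) ∣ a + 2 * c - b ∧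
      ∀ a' b' c', a' ≤ a → b' ≤ b → c' ≤ c → (n : ℤ) ∣ a' + 2 * c' - b' →
        (a' = 0 ∧ b' = 0 ∧ c' = 0) ∨ (a' = a ∧ b' = b ∧ c' = c) := by
  simp [IsMinZeroSumTriple, Prod.forall, Prod.mk_le_mk, Prod.ext_iff]

lemma eq_zero_or_eq_of_dvd_of_lt {w : ℤ} (h : (n : ℤ) ∣ w) (h₀ : -n < w) (h₁ : w < 2 * n) :
    w = 0 ∨ w = n := by
  obtain ⟨m, rfl⟩ := h
  have : -1 < m := by nlinarith
  have : m < 2 := by nlinarith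
  interval_cases m <;> simp

lemma isMinZeroSumTriple_one_one_zero (hn : 2 ≤ n) : IsMinZeroSumTriple n (1, 1, 0) := by
  refine isMinZeroSumTriple_mk_iff.2 ⟨by simp, ⟨0, by simp⟩, fun a' b' c' ha hb hc hdvd => ?_⟩
  rcases eq_zero_or_eq_of_dvd_of_lt hdvd (by omega) (by omega) with h | h <;> omega

lemma isMinZeroSumTriple_zero_two_one (hn : 3 ≤ n) : IsMinZeroSumTriple n (0, 2, 1) := by
  refine isMinZeroSumTriple_mk_iff.2 ⟨by simp, ⟨0, by simp⟩, fun a' b' c' ha hb hc hdvd => ?_⟩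
  rcases eq_zero_or_eq_of_dvd_of_lt hdvd (by omega) (by omega) with h | h <;> omega

lemma isMinZeroSumTriple_zero_self_zero (hn : 0 < n) : IsMinZeroSumTriple n (0, n, 0) := by
  refine isMinZeroSumTriple_mk_iff.2 ⟨by omega, ⟨-1, by simp⟩, fun a' b' c' ha hb hc hdvd => ?_⟩
  have hb' : (n : ℤ) ∣ b' := by simpa [show a' = 0 by omega, show c' = 0 by omega] using hdvd
  rcases eq_zero_or_eq_of_dvd_of_lt hb' (by omega) (by omega) with h | h <;> omega

lemma isMinZeroSumTriple_of_add_two_mul_eq {a c : ℕ} (hn : 0 < n) (h : a + 2 * c = n) :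
    IsMinZeroSumTriple n (a, 0, c) := by
  refine isMinZeroSumTriple_mk_iff.2
    ⟨by omega, ⟨1, by simp; omega⟩, fun a' b' c' ha hb hc hdvd => ?_⟩
  rcases eq_zero_or_eq_of_dvd_of_lt hdvd (by omega) (by omega) with h | h <;> omega

theorem IsMinZeroSumTriple.classification {a b c : ℕ} (h : IsMinZeroSumTriple n (a, b, c))
    (hn : 0 < n) (hc : Odd n → c < n) :
    (a = 1 ∧ b = 1 ∧ c = 0) ∨ (a = 0 ∧ b = 2 ∧ c = 1) ∨ (a = 0 ∧ b = n ∧ c = 0) ∨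
      (b = 0 ∧ a + 2 * c = n) ∨ (a = 0 ∧ b = 1 ∧ 2 * c = n + 1) := by
  -- each case exhibits a zero-sum subtriple, which `hmin` forces to be `0` or the whole triple
  obtain ⟨hne, hdvd, hmin⟩ := isMinZeroSumTriple_mk_iff.1 h
  have hcn : c < n := by
    rcases Nat.even_or_odd n with ⟨m, rfl⟩ | hodd
    · by_contra! hc'
      rcases hmin 0 0 m (Nat.zero_le _) (Nat.zero_le _) (by omega) ⟨1, by push_cast; ring⟩
        with h | h <;> omega
    · exact hc hodd
  rcases Nat.eq_zero_or_pos b with rfl | hb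
  · have hn_le : n ≤ a + 2 * c :=
      Nat.le_of_dvd (by omega) (by exact_mod_cast (by simpa using hdvd : (n : ℤ) ∣ a + 2 * c))
    by_contra! hne'
    rcases le_or_gt (2 * c) n with h2c | h2c
    · rcases hmin (n - 2 * c) 0 c (by omega) le_rfl le_rfl
        ⟨1, by push_cast [Nat.cast_sub h2c]; ring⟩ with h | h <;> omega
    rcases Nat.even_or_odd n with ⟨m, rfl⟩ | ⟨m, rfl⟩
    · rcases hmin 0 0 m (Nat.zero_le _) le_rfl (by omega) ⟨1, by push_cast; ring⟩
        with h | h <;> omega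
    rcases Nat.eq_zero_or_pos a with rfl | ha
    · rcases eq_zero_or_eq_of_dvd_of_lt hdvd (by omega) (by omega) with h | h <;> omega
    · rcases hmin 1 0 m ha le_rfl (by omega) ⟨1, by push_cast; ring⟩ with h | h <;> omega
  rcases Nat.eq_zero_or_pos a with rfl | ha
  swap
  · rcases hmin 1 1 0 ha hb (Nat.zero_le _) ⟨0, by simp⟩ with h | h <;> omega
  rcases Nat.eq_zero_or_pos c with rfl | hc₀
  · have hn_le : n ≤ b := Nat.le_of_dvd hb (by exact_mod_cast (by simpa using hdvd : (n : ℤ) ∣ b))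
    rcases hmin 0 n 0 le_rfl hn_le le_rfl ⟨-1, by simp⟩ with h | h <;> omega
  rcases Nat.lt_or_ge b 2 with hb₁ | hb₂
  · rcases eq_zero_or_eq_of_dvd_of_lt hdvd (by omega) (by omega) with h | h <;> omega
  · rcases hmin 0 2 1 le_rfl hb₂ hc₀ ⟨0, by simp⟩ with h | h <;> omega

lemma IsMinZeroSumTriple.tripleSize_mem_Icc {σ : ℕ × ℕ × ℕ}
    (h : IsMinZeroSumTriple n σ) (hn : 3 ≤ n) (hc : Odd n → σ.2.2 < n) :
    tripleSize σ ∈ Set.Icc 2 n := by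
  obtain ⟨a, b, c⟩ := σ
  rcases h.classification (by omega) hc with h | h | h | h | h <;> simp <;> omega

/-- `p`, `v`, `x`, `y` indicate whether `σ` is `(1,1,0)`, `(0,2,1)`, `(0,n,0)` or
`(0,1,(n+1)/2)`; the remaining atoms `(n-2c,0,c)` have weight `n`. -/
lemma IsMinZeroSumTriple.exists_profile {σ : ℕ × ℕ × ℕ} (h : IsMinZeroSumTriple n σ)
    (hn : 0 < n) (hc : Odd n → σ.2.2 < n) : ∃ p v x y : ℕ,
      tripleWeight σ = n * (1 - p - v - 2 * x : ℤ) ∧ σ.2.1 = p + 2 * v + n * x + y ∧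
        2 * v + (n + 1) * y ≤ 2 * σ.2.2 := by
  obtain ⟨a, b, c⟩ := σ
  rcases h.classification hn hc with ⟨rfl, rfl, rfl⟩ | ⟨rfl, rfl, rfl⟩ | ⟨rfl, rfl, rfl⟩ |
    ⟨rfl, h⟩ | ⟨rfl, rfl, h⟩
  · exact ⟨1, 0, 0, 0, by simp⟩
  · exact ⟨0, 1, 0, 0, by simp⟩
  · exact ⟨0, 0, 1, 0, by simp⟩
  · exact ⟨0, 0, 0, 0, by simp; omega, by simp⟩
  · exact ⟨0, 0, 0, 1, by simp; omega, by simp; omega⟩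

lemma tripleSize_mem_Icc_of_mem_tripleLengthSet (hn : 3 ≤ n) {τ : ℕ × ℕ × ℕ}
    (hτ : Odd n → τ.2.2 < n) {l : ℕ} (hl : l ∈ tripleLengthSet n τ) :
    tripleSize τ ∈ Set.Icc (2 * l) (n * l) := by
  obtain ⟨t, rfl, ht, rfl⟩ := hl
  have hsize : ∀ s ∈ t.map tripleSize, s ∈ Set.Icc 2 n := by
    simp only [mem_map, forall_exists_index, and_imp]
    rintro _ σ hσ rfl
    exact (ht σ hσ).tripleSize_mem_Icc hn
      fun hodd => (le_sum_of_mem hσ).2.2.trans_lt (hτ hodd)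
  rw [map_multiset_sum]
  constructor
  · simpa [mul_comm] using card_nsmul_le_sum fun s hs => (hsize s hs).1
  · simpa [mul_comm] using sum_le_card_nsmul _ _ fun s hs => (hsize s hs).2

lemma exists_profile_of_forall_mem (hn : 0 < n) {t : Multiset (ℕ × ℕ × ℕ)}
    (ht : ∀ σ ∈ t, IsMinZeroSumTriple n σ) (hc : Odd n → t.sum.2.2 < n) : ∃ P V X Y : ℕ,
      tripleWeight t.sum = n * (card t - P - V - 2 * X : ℤ) ∧
        t.sum.2.1 = P + 2 * V + n * X + Y ∧ 2 * V + (n + 1) * Y ≤ 2 * t.sum.2.2 := by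
  induction t using Multiset.induction_on with
  | empty => exact ⟨0, 0, 0, 0, by simp⟩
  | cons σ t ih =>
    have hσc : Odd n → σ.2.2 < n := fun hodd => lt_of_le_of_lt (by simp) (hc hodd)
    have htc : Odd n → t.sum.2.2 < n := fun hodd => lt_of_le_of_lt (by simp) (hc hodd)
    obtain ⟨P, V, X, Y, h₁, h₂, h₃⟩ := ih (fun τ hτ => ht τ (mem_cons_of_mem hτ)) htc
    obtain ⟨p, v, x, y, e₁, e₂, e₃⟩ := (ht σ (mem_cons_self σ t)).exists_profile hn hσc
    refine ⟨P + p, V + v, X + x, Y + y, ?_, ?_, ?_⟩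
    · rw [sum_cons, _root_.map_add, e₁, h₁, card_cons]; push_cast; ring
    · simp only [sum_cons, Prod.snd_add, Prod.fst_add, e₂, h₂]; ring
    · simp only [sum_cons, Prod.snd_add, mul_add]; omega

end MinZeroSumTriple

section Progressions

lemma isAAP_one_natSetToInt {L : Set ℕ} {a l M : ℕ} (hI : ∀ i ≤ l, a + i ∈ L)
    (hL : ∀ x ∈ L, a ≤ x + M ∧ x ≤ a + l + M) : IsAAP 1 M (natSetToInt L) := by
  refine ⟨one_pos, a, l, {w | w ∈ Set.Icc (-(M : ℤ)) (-1) ∧ a + w ∈ natSetToInt L},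
    {w | w ∈ Set.Icc ((l : ℤ) * (1 : ℕ) + 1) (l * (1 : ℕ) + M) ∧ a + w ∈ natSetToInt L},
    fun _ hw => hw.1, fun _ hw => hw.1, fun _ _ => one_dvd _, fun _ _ => one_dvd _, ?_⟩
  ext z
  simp only [natSetToInt, Set.mem_image, Set.mem_union, Set.mem_Icc]
  constructor
  · rintro ⟨x, hx, rfl⟩
    have := hL x hx
    refine ⟨x - a, ?_, by ring⟩
    by_cases hlo : x < a
    · exact Or.inl (Or.inl ⟨by omega, x, hx, by ring⟩)
    by_cases hhi : x ≤ a + l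
    · exact Or.inl (Or.inr ⟨x - a, by omega, by push_cast [Nat.not_lt.1 hlo]; ring⟩)
    · exact Or.inr ⟨by push_cast; omega, x, hx, by ring⟩
  · rintro ⟨w, (⟨-, hw⟩ | ⟨i, hi, rfl⟩) | ⟨-, hw⟩, rfl⟩
    · exact hw
    · exact ⟨a + i, hI i hi, by push_cast; ring⟩
    · exact hw

lemma not_isAP_one_natSetToInt {L : Set ℕ} {a b : ℕ} (ha : a ∈ L) (hb : b ∈ L)
    (hab : a + 1 < b) (ha₁ : a + 1 ∉ L) : ¬IsAP 1 (natSetToInt L) := by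
  rintro ⟨-, c, l, hL⟩
  have hmem : ∀ x : ℕ, x ∈ L ↔ (x : ℤ) ∈ natSetToInt L := fun x => by simp [natSetToInt]
  rw [hmem, hL] at ha hb ha₁
  obtain ⟨i, hi, hia⟩ := ha
  obtain ⟨j, hj, hjb⟩ := hb
  exact ha₁ ⟨i + 1, by push_cast at hia hjb; omega, by push_cast at hia ⊢; omega⟩

end Progressions

/-- The count triple of `A_k`; `n % 2` merges the even and the odd case. -/
def countsA (n k : ℕ) : ℕ × ℕ × ℕ := (n * k + 2 * (n % 2), n * k, n - n % 2)

section CountsA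

variable {n : ℕ}

lemma tripleWeight_countsA (k : ℕ) : tripleWeight (countsA n k) = 2 * n := by
  have : n % 2 ≤ n := Nat.mod_le n 2
  simp only [countsA, tripleWeight_mk]
  push_cast [Nat.cast_sub this]
  ring

lemma add_add_two_mul_add_two_mem_tripleLengthSet_countsA (hn : 3 ≤ n) {k p v x : ℕ}
    (h : p + 2 * v + n * x = n * k) (hv : v ≤ n - n % 2) :
    p + v + 2 * x + 2 ∈ tripleLengthSet n (countsA n k) := by
  -- the `2g`s not used by the atoms `(0,2,1)` are shared by two atoms `(n-2c,0,c)`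
  set c₁ := (n - n % 2 - v + 1) / 2
  set c₂ := (n - n % 2 - v) / 2
  refine ⟨replicate p (1, 1, 0) + replicate v (0, 2, 1) + replicate x (0, n, 0) +
    replicate x (n, 0, 0) + {(n - 2 * c₁, 0, c₁), (n - 2 * c₂, 0, c₂)}, ?_, ?_, ?_⟩
  · simp; omega
  · intro σ hσ
    simp only [mem_add, mem_replicate, insert_eq_cons, mem_cons, mem_singleton] at hσ
    rcases hσ with ((((⟨-, rfl⟩ | ⟨-, rfl⟩) | ⟨-, rfl⟩) | ⟨-, rfl⟩) | rfl | rfl)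
    · exact isMinZeroSumTriple_one_one_zero (by omega)
    · exact isMinZeroSumTriple_zero_two_one hn
    · exact isMinZeroSumTriple_zero_self_zero (by omega)
    all_goals exact isMinZeroSumTriple_of_add_two_mul_eq (by omega) (by omega)
  · have := mul_comm x n
    simp [countsA, Prod.ext_iff]
    omega

lemma mem_tripleLengthSet_countsA_of_mem_Icc (hn : 3 ≤ n) {k m : ℕ}
    (hm : m ∈ Set.Icc (2 * k + n) (n * k + 2)) : m ∈ tripleLengthSet n (countsA n k) := by
  obtain ⟨hm₁, hm₂⟩ := hm
  obtain ⟨q, rfl⟩ : ∃ q, n = q + 2 := ⟨n - 2, by omega⟩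
  obtain ⟨k, rfl⟩ : ∃ k', k = k' + 1 := ⟨k - 1, by rcases k with _ | _ <;> simp at hm₂ ⊢; omega⟩
  -- `m = nk + 2 - j`; writing `j = q x + v` with `v < q`, take `x` atoms `(0,n,0)`, `v` atoms
  -- `(0,2,1)` and fill up with `(1,1,0)`
  set j := (q + 2) * (k + 1) + 2 - m
  have e₁ : (q + 2) * (k + 1) = q * k + q + 2 * k + 2 := by ring
  have e₂ : (q + 2) * (j / q) = q * (j / q) + 2 * (j / q) := by ring
  have hj := Nat.div_add_mod j q
  have hv := Nat.mod_lt j (by omega : 0 < q)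
  have hx : j / q ≤ k := Nat.le_of_mul_le_mul_left (by omega : q * (j / q) ≤ q * k) (by omega)
  convert add_add_two_mul_add_two_mem_tripleLengthSet_countsA (by omega) (k := k + 1)
    (p := (q + 2) * (k + 1) - 2 * (j % q) - (q + 2) * (j / q)) (v := j % q) (x := j / q)
    (by omega) (by omega) using 1
  omega

lemma two_mul_add_two_mem_tripleLengthSet_countsA (hn : 3 ≤ n) (k : ℕ) :
    2 * k + 2 ∈ tripleLengthSet n (countsA n k) := by
  simpa using add_add_two_mul_add_two_mem_tripleLengthSet_countsA hn (p := 0) (v := 0) (x := k)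
    (by simp) (Nat.zero_le _)

lemma mem_Ioc_of_mem_tripleLengthSet_countsA (hn : 3 ≤ n) {k l : ℕ}
    (hl : l ∈ tripleLengthSet n (countsA n k)) : l ∈ Set.Ioc (2 * k) (n * k + n) := by
  obtain ⟨h₁, h₂⟩ := tripleSize_mem_Icc_of_mem_tripleLengthSet hn
    (fun hodd => by simp only [countsA]; have := Nat.odd_iff.1 hodd; omega) hl
  simp only [countsA, tripleSize_mk] at h₁ h₂
  have : 2 * k < l := Nat.lt_of_mul_lt_mul_left (a := n) (by rw [mul_left_comm]; omega)
  exact ⟨this, by omega⟩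

lemma two_mul_add_three_not_mem_tripleLengthSet_countsA (hn : 7 ≤ n) (k : ℕ) :
    2 * k + 3 ∉ tripleLengthSet n (countsA n k) := by
  rintro ⟨t, ht_card, ht, ht_sum⟩
  obtain ⟨P, V, X, Y, h₁, h₂, h₃⟩ := exists_profile_of_forall_mem (by omega) ht fun hodd => by
    simp only [ht_sum, countsA]; have := Nat.odd_iff.1 hodd; omega
  rw [ht_sum, tripleWeight_countsA, ht_card] at h₁
  simp only [ht_sum, countsA] at h₂ h₃
  have h₁' : P + V + 2 * X = 2 * k + 1 := by
    have : (n : ℤ) * (2 * k + 3 - P - V - 2 * X) = n * 2 := by push_cast at h₁; linarith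
    have := mul_left_cancel₀ (by omega : (n : ℤ) ≠ 0) this
    omega
  -- the counts of `-g` then force `X = k - 1` and `Y = 1`, leaving too few `2g`s
  have hX : X < k := by
    by_contra! h
    have := Nat.mul_le_mul_left n h
    omega
  obtain ⟨d, rfl⟩ := Nat.exists_eq_add_of_lt hX
  have h₂' : P + 2 * V + Y = n * d + n := by rw [mul_add, mul_add] at h₂; omega
  have hY : Y ≤ 1 := by
    by_contra! h
    have := Nat.mul_le_mul_left (n + 1) h
    omega
  have := Nat.mul_le_mul_right d hn
  obtain rfl : d = 0 := by omega
  interval_cases Y <;> omega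

lemma seqOfCounts_countsA {G : Type*} [AddCommGroup G] (g : G) (n k : ℕ) :
    seqOfCounts g (countsA n k) =
      if Even n then
        replicate (n * k) g + replicate (n * k) (-g) + replicate n ((2 : ℕ) • g)
      else
        replicate (n * k + 2) g + replicate (n * k) (-g) + replicate (n - 1) ((2 : ℕ) • g) := by
  rcases Nat.even_or_odd n with h | h
  · simp [h, countsA, Nat.even_iff.1 h]
  · simp [Nat.not_even_iff_odd.2 h, countsA, Nat.odd_iff.1 h]

end CountsA

theorem stmt_13_general (G : Type*) [AddCommGroup G] (n : ℕ) (hn : 7 ≤ n) (g : G)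
    (hord : addOrderOf g = n) :
    ∃ M : ℕ, 0 < M ∧ ∀ k : ℕ, n - 1 ≤ k →
      let A : Multiset G :=
        if Even n then
          Multiset.replicate (n * k) g + Multiset.replicate (n * k) (-g) +
            Multiset.replicate n ((2 : ℕ) • g)
        else
          Multiset.replicate (n * k + 2) g + Multiset.replicate (n * k) (-g) +
            Multiset.replicate (n - 1) ((2 : ℕ) • g)
      IsAAP 1 M (natSetToInt (lengthSet A)) ∧ ¬IsAP 1 (natSetToInt (lengthSet A)) := by
  refine ⟨n, by omega, fun k hk => ?_⟩
  dsimp only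
  rw [← seqOfCounts_countsA, lengthSet_seqOfCounts (by omega), hord]
  have h7k : 7 * k ≤ n * k := Nat.mul_le_mul_right k hn
  have hIcc (m : ℕ) (hm : m ∈ Set.Icc (2 * k + n) (n * k + 2)) :=
    mem_tripleLengthSet_countsA_of_mem_Icc (by omega) hm
  refine ⟨isAAP_one_natSetToInt (a := 2 * k + n) (l := n * k + 2 - (2 * k + n))
      (fun i hi => hIcc _ ⟨by omega, by omega⟩) fun x hx => ?_,
    not_isAP_one_natSetToInt (two_mul_add_two_mem_tripleLengthSet_countsA (by omega) k)
      (hIcc _ ⟨le_rfl, by omega⟩) (by omega)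
      (two_mul_add_three_not_mem_tripleLengthSet_countsA hn k)⟩
  have := mem_Ioc_of_mem_tripleLengthSet_countsA (by omega) hx
  simp only [Set.mem_Ioc] at this
  omega

/-- **Lemma 4.3.** Let `G` be cyclic of order `n ≥ 7` and `g` a generator. For `k ∈ ℕ`,
let `A_k = g^{nk} (-g)^{nk} (2g)^n` if `n` is even, and
`A_k = g^{nk+2} (-g)^{nk} (2g)^{n-1}` if `n` is odd. Then there is a bound `M ∈ ℕ` such
that for all `k ≥ n-1`, the set `𝖫(A_k)` is an AAP with difference `1` and bound `M`,
but not an arithmetical progression with difference `1`. -/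
theorem stmt_13 (G : Type*) [AddCommGroup G] (n : ℕ) (hcyc : IsAddCyclic G)
    (hcard : Nat.card G = n) (hn : 7 ≤ n) (g : G) (hord : addOrderOf g = n) :
    ∃ M : ℕ, 0 < M ∧ ∀ k : ℕ, n - 1 ≤ k →
      let A : Multiset G :=
        if Even n then
          Multiset.replicate (n * k) g + Multiset.replicate (n * k) (-g) +
            Multiset.replicate n ((2 : ℕ) • g)
        else
          Multiset.replicate (n * k + 2) g + Multiset.replicate (n * k) (-g) +
            Multiset.replicate (n - 1) ((2 : ℕ) • g)
      IsAAP 1 M (natSetToInt (lengthSet A)) ∧ ¬IsAP 1 (natSetToInt (lengthSet A)) :=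
  stmt_13_general G n hn g hord
end

section
/- Let G be a finite abelian group and let S be a zero-sum free sequence over G, i.e. no nonempty submultiset of S has sum 0. If ∏_{g ∈ supp(S)} (1 + v_g(S)) > |G|, where v_g(S) is the multiplicity of g in S and supp(S) = {g ∈ G : v_g(S) > 0}, then there is an atom A of ℬ(G) with |A| ≥ 3 such that the union (−A)·A is a submultiset of (−S)·S (here −T denotes the multiset of the negatives of the elements of T). -/
/-!
Among the `∏ (1 + v_g(S)) > |G|` subsequences of `S`, two distinct ones have the same sum.
Cancelling their common part leaves disjoint subsequences `U₁, U₂` of `S`, not both empty, with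
`σ(U₁) = σ(U₂)`, so `(-U₁)U₂` is a nonempty zero-sum sequence and contains an atom `A = (-B)C`
with `B ≤ U₁`, `C ≤ U₂`. As `S` is zero-sum free, neither `B` nor `C` is empty, and if both were
single elements they would be equal, contradicting disjointness; hence `|A| ≥ 3`. Finally
`(-A)A = (-(BC))(BC)` and `BC ≤ S`.
-/

open Multiset

def IsZeroSumFree {M : Type*} [AddCommMonoid M] (S : Multiset M) : Prop :=
  ∀ T ≤ S, T ≠ 0 → T.sum ≠ 0

theorem IsZeroSumFree.mono {M : Type*} [AddCommMonoid M] {S T : Multiset M}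
    (hS : IsZeroSumFree S) (hTS : T ≤ S) : IsZeroSumFree T :=
  fun U hU => hS U (hU.trans hTS)

namespace Multiset

section Lattice

variable {α : Type*} [DecidableEq α]

theorem exists_eq_add_of_le_add {s t u : Multiset α} (h : s ≤ t + u) :
    ∃ v ≤ t, ∃ w ≤ u, s = v + w :=
  ⟨s ∩ t, inter_le_right, s - t, tsub_le_iff_left.2 h, by rw [add_comm, sub_add_inter]⟩

theorem disjoint_sub_sub (s t : Multiset α) : Disjoint (s - t) (t - s) := by
  refine disjoint_left.2 fun {a} hs ht => ?_
  rw [← count_pos, count_sub] at hs ht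
  omega

theorem sub_add_sub_le {s t u : Multiset α} (hs : s ≤ u) (ht : t ≤ u) : s - t + (t - s) ≤ u := by
  refine le_iff_count.2 fun a => ?_
  have := le_iff_count.1 hs a
  have := le_iff_count.1 ht a
  rw [count_add, count_sub, count_sub]
  omega

theorem sub_add_sub_ne_zero {s t : Multiset α} (h : s ≠ t) : s - t + (t - s) ≠ 0 := by
  simp only [Ne, add_eq_zero, tsub_eq_zero_iff_le]
  exact fun hst => h (le_antisymm hst.1 hst.2)

end Lattice

section Sum

variable {M : Type*} [AddCancelCommMonoid M] [DecidableEq M]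

theorem sum_sub_eq_sum_sub_of_sum_eq {s t : Multiset M} (h : s.sum = t.sum) :
    (s - t).sum = (t - s).sum := by
  have hs := congrArg sum (sub_add_inter s t)
  have ht := congrArg sum (sub_add_inter t s)
  rw [sum_add] at hs ht
  rw [inter_comm] at ht
  exact add_right_cancel (hs.trans (h.trans ht.symm))

theorem exists_ne_le_sum_eq_of_card_lt_prod [Finite M] (S : Multiset M)
    (h : Nat.card M < ∏ g ∈ S.toFinset, (1 + S.count g)) :
    ∃ T₁ ≤ S, ∃ T₂ ≤ S, T₁ ≠ T₂ ∧ T₁.sum = T₂.sum := by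
  have := Fintype.ofFinite M
  have hcard : (Finset.univ : Finset M).card < (Finset.Iic S).card := by
    rw [Finset.card_univ, ← Nat.card_eq_fintype_card, card_Iic]
    simpa only [add_comm] using h
  obtain ⟨T₁, h₁, T₂, h₂, hne, heq⟩ :=
    Finset.exists_ne_map_eq_of_card_lt_of_maps_to hcard (f := sum)
      fun _ _ => Finset.mem_coe.2 (Finset.mem_univ _)
  exact ⟨T₁, Finset.mem_Iic.1 h₁, T₂, Finset.mem_Iic.1 h₂, hne, heq⟩

theorem exists_disjoint_add_le_sum_eq_of_card_lt_prod [Finite M]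
    (S : Multiset M) (h : Nat.card M < ∏ g ∈ S.toFinset, (1 + S.count g)) :
    ∃ U₁ U₂ : Multiset M, Disjoint U₁ U₂ ∧ U₁ + U₂ ≤ S ∧ U₁ + U₂ ≠ 0 ∧ U₁.sum = U₂.sum := by
  obtain ⟨T₁, h₁, T₂, h₂, hne, heq⟩ := exists_ne_le_sum_eq_of_card_lt_prod S h
  exact ⟨T₁ - T₂, T₂ - T₁, disjoint_sub_sub T₁ T₂, sub_add_sub_le h₁ h₂,
    sub_add_sub_ne_zero hne, sum_sub_eq_sum_sub_of_sum_eq heq⟩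

end Sum

variable {G : Type*} [InvolutiveNeg G]

theorem map_neg_add_map_neg_add (s t : Multiset G) :
    (s.map (fun x => -x) + t).map (fun x => -x) + (s.map (fun x => -x) + t) =
      (s + t).map (fun x => -x) + (s + t) := by
  simp only [map_add, map_map, Function.comp_def, neg_neg, map_id']
  abel

theorem exists_le_map_neg_add_of_le {A s t : Multiset G} (h : A ≤ s.map (fun x => -x) + t) :
    ∃ B ≤ s, ∃ C ≤ t, A = B.map (fun x => -x) + C := by
  classical
  obtain ⟨B, hB, C, hC, rfl⟩ := exists_eq_add_of_le_add h
  refine ⟨B.map (fun x => -x), ?_, C, hC, ?_⟩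
  · simpa only [map_map, Function.comp_def, neg_neg, map_id'] using map_le_map (f := fun x => -x) hB
  · simp only [map_map, Function.comp_def, neg_neg, map_id']

end Multiset

theorem exists_isMinZeroSum_le {G : Type*} [AddCommGroup G] {A₀ : Multiset G} (h0 : A₀ ≠ 0)
    (hsum : A₀.sum = 0) : ∃ A ≤ A₀, IsMinZeroSum A := by
  obtain ⟨A, ⟨hAle, hA0, hAsum⟩, hmin⟩ :=
    wellFounded_lt.has_min {A : Multiset G | A ≤ A₀ ∧ A ≠ 0 ∧ A.sum = 0} ⟨A₀, le_rfl, h0, hsum⟩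
  refine ⟨A, hAle, hA0, hAsum, ?_⟩
  rintro ⟨B, C, hB, hC, hBsum, -, rfl⟩
  exact hmin B ⟨(le_add_right B C).trans hAle, hB, hBsum⟩
    (lt_add_of_pos_right B (pos_iff_ne_zero.2 hC))

theorem three_le_card_add_card_of_sum_eq {M : Type*} [AddCommMonoid M] {B C : Multiset M}
    (hB : IsZeroSumFree B) (hC : IsZeroSumFree C) (hdisj : Disjoint B C) (h0 : B + C ≠ 0)
    (hsum : B.sum = C.sum) : 3 ≤ card B + card C := by
  have hB0 : B ≠ 0 := fun hB0 => hC C le_rfl (by simpa [hB0] using h0) (by simp [← hsum, hB0])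
  have hC0 : C ≠ 0 := fun hC0 => hB B le_rfl (by simpa [hC0] using h0) (by simp [hsum, hC0])
  have hB1 := card_pos.2 hB0
  have hC1 := card_pos.2 hC0
  by_contra! hcard
  obtain ⟨b, rfl⟩ := card_eq_one.1 (show card B = 1 by omega)
  obtain ⟨c, rfl⟩ := card_eq_one.1 (show card C = 1 by omega)
  rw [sum_singleton, sum_singleton] at hsum
  exact disjoint_left.1 hdisj (mem_singleton_self b) (hsum ▸ mem_singleton_self c)

/-- **Lemma 5.4.** Let `G` be a finite abelian group and `S` a zero-sum free sequence over
`G`. If `∏_{g ∈ supp(S)} (1 + v_g(S)) > |G|`, then there is an atom `A` of `ℬ(G)` with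
`|A| ≥ 3` such that `(-A)A` divides `(-S)S`. -/
theorem stmt_17 (G : Type*) [AddCommGroup G] [Finite G] [DecidableEq G]
    (S : Multiset G) (hS : ∀ T : Multiset G, T ≤ S → T ≠ 0 → T.sum ≠ 0)
    (hprod : Nat.card G < S.toFinset.prod (fun g => 1 + S.count g)) :
    ∃ A : Multiset G, IsMinZeroSum A ∧ 3 ≤ Multiset.card A ∧
      A.map (fun x => -x) + A ≤ S.map (fun x => -x) + S := by
  obtain ⟨U₁, U₂, hdisj, hU, hU0, hsum⟩ := exists_disjoint_add_le_sum_eq_of_card_lt_prod S hprod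
  have hA₀0 : U₁.map (fun x => -x) + U₂ ≠ 0 := by simpa using hU0
  have hA₀sum : (U₁.map (fun x => -x) + U₂).sum = 0 := by
    rw [sum_add, sum_map_neg', hsum, neg_add_cancel]
  obtain ⟨A, hA, hAmin⟩ := exists_isMinZeroSum_le hA₀0 hA₀sum
  obtain ⟨B, hB, C, hC, rfl⟩ := exists_le_map_neg_add_of_le hA
  have hBC : B + C ≤ S := (add_le_add hB hC).trans hU
  have hBCsum : B.sum = C.sum := by
    simpa only [sum_add, sum_map_neg', neg_add_eq_zero] using hAmin.2.1
  refine ⟨_, hAmin, ?_, ?_⟩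
  · have hfree : IsZeroSumFree (B + C) := fun T hT => hS T (hT.trans hBC)
    simpa using three_le_card_add_card_of_sum_eq (hfree.mono (le_add_right B C))
      (hfree.mono (le_add_left C B)) (hdisj.mono hB hC) (by simpa using hAmin.1) hBCsum
  · rw [map_neg_add_map_neg_add]
    exact add_le_add (map_le_map hBC) hBC
end
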